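/- The operator Ω₂ = [Δ, Ω₁] has the explicit form Ω₂ = (α−1)·Σ_{i≥3} (i−1)(i−2)·pᵢ·∂_{i−2} + Σ_{i,j≥1, i+j≥3} (i+j−2)·pᵢ·pⱼ·∂_{i+j−2} + α·Σ_{i,j≥1} i·j·p_{i+j+2}·∂ᵢ∂ⱼ as R-linear operators on A. -/
import Mathlib


/- R = ℚ[α], A = R[p₁,p₂,…].  With Ω₁ := E₂, Ω_{k+1} := [Δ, Ω_k] (here `Ω k` denotes
   Ω_{k+1}), the operator Ω₂ = [Δ, Ω₁] equals
   (α−1)·Σ_{i≥3}(i−1)(i−2)·pᵢ·∂_{i−2} + Σ_{i,j≥1, i+j≥3}(i+j−2)·pᵢ·pⱼ·∂_{i+j−2}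
   + α·Σ_{i,j≥1} ij·p_{i+j+2}·∂ᵢ∂ⱼ.
   (The terms excluded by the range restrictions i ≥ 3, resp. i+j ≥ 3, have zero
   coefficient, so the sums below over all indices agree with the restricted sums.) -/

open MvPolynomial

noncomputable section

abbrev R : Type := Polynomial ℚ
abbrev A : Type := MvPolynomial ℕ+ R

/-- the variable α of R = ℚ[α] -/
def α : R := Polynomial.X

/-- the power-sum generator pᵢ (i ≥ 1) -/
def p (i : ℕ+) : A := X i

/-- the partial derivative ∂/∂pᵢ -/
def d (i : ℕ+) (f : A) : A := pderiv i f

/-- the Laplace–Beltrami operator D_α -/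
def Dal (f : A) : A :=
    (Polynomial.C (1/2 : ℚ) * (α - 1)) •
      (∑ᶠ i : ℕ+, (((i : ℕ) : R) * (((i : ℕ) : R) - 1)) • (p i * d i f))
  + (Polynomial.C (1/2 : ℚ) * α) •
      (∑ᶠ i : ℕ+, ∑ᶠ j : ℕ+, (((i : ℕ) : R) * ((j : ℕ) : R)) • (p (i + j) * d i (d j f)))
  + Polynomial.C (1/2 : ℚ) •
      (∑ᶠ i : ℕ+, ∑ᶠ j : ℕ+, (((i : ℕ) : R) + ((j : ℕ) : R)) • (p i * p j * d (i + j) f))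

/-- E₂ = Σ_{i≥1} i·p_{i+1}·∂ᵢ -/
def E₂ (f : A) : A := ∑ᶠ i : ℕ+, ((i : ℕ) : R) • (p (i + 1) * d i f)

/-- Δ = [D_α, E₂] -/
def Δop (f : A) : A := Dal (E₂ f) - E₂ (Dal f)

/-- Ω k is the operator Ω_{k+1}: Ω 0 = Ω₁ = E₂ and Ω (k+1) = Ω_{k+2} = [Δ, Ω_{k+1}]. -/
def Ω : ℕ → A → A
  | 0 => E₂
  | k + 1 => fun f => Δop (Ω k f) - Ω k (Δop f)

open Function


lemma pnat_sub_add (b : ℕ+) (hb : b ≠ 1) : (b - 1) + 1 = b := by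
  have h2 : 1 < b := lt_of_le_of_ne b.one_le (Ne.symm hb)
  have hb1 := b.pos
  apply PNat.coe_injective
  rw [PNat.add_coe, PNat.sub_coe, if_pos h2, PNat.one_coe]
  have : (1:ℕ) ≤ (b:ℕ) := b.one_le
  omega

lemma pnat_add_sub (i : ℕ+) (k : ℕ+) : (i + k) - k = i := by
  have h : k < i + k := by
    rw [← PNat.coe_lt_coe]; push_cast; have := i.pos; omega
  apply PNat.coe_injective
  rw [PNat.sub_coe, if_pos h]; push_cast; omega

lemma pnat_shift_inj : Injective (fun i : ℕ+ => i + 1) := fun x y h => by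
  have : (x + 1) - 1 = (y + 1) - 1 := by simp only at h; rw [h]
  rwa [pnat_add_sub, pnat_add_sub] at this

lemma pnat_range_shift : Set.range (fun i : ℕ+ => i + 1) = {i : ℕ+ | i ≠ 1} := by
  ext i
  constructor
  · rintro ⟨j, rfl⟩
    have : (1:ℕ+) < j + 1 := by rw [← PNat.coe_lt_coe]; push_cast; have := j.pos; omega
    exact ne_of_gt this
  · intro hi
    exact ⟨i - 1, pnat_sub_add i hi⟩

lemma finsum_pnat_shift {M : Type*} [AddCommMonoid M] (g : ℕ+ → M) (hz : g 1 = 0) :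
    ∑ᶠ i, g i = ∑ᶠ i, g (i + 1) := by
  rw [← finsum_mem_range (f := g) pnat_shift_inj, pnat_range_shift]
  have h1 : ∑ᶠ i, g i = ∑ᶠ i ∈ (Set.univ : Set ℕ+), g i := (finsum_mem_univ g).symm
  have h2 : (Set.univ : Set ℕ+) = insert 1 {i : ℕ+ | i ≠ 1} := by
    ext i; simp [em]
  rw [h1, h2, finsum_mem_insert_of_eq_zero_if_notMem (fun _ => hz)]

lemma d_comm (i j : ℕ+) (f : A) : d i (d j f) = d j (d i f) := by
  induction f using MvPolynomial.induction_on with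
  | C a => simp [d]
  | add f g hf hg => simp only [d, map_add] at *; rw [hf, hg]
  | mul_X f n hf =>
      simp only [d, pderiv_mul, pderiv_X, map_add] at *
      rw [hf]
      simp only [Pi.single_apply]
      split_ifs with h1 h2 <;> simp <;> ring

-- §2 finiteness helpers
lemma pnat_finite_of_bdd {s : Set ℕ+} (m : ℕ+) (h : ∀ i ∈ s, i ≤ m) : s.Finite :=
  (Set.finite_Iic m).subset h

lemma pnat_le_sub_add (i k : ℕ+) : i ≤ (i - k) + k := by
  rw [← PNat.coe_le_coe, PNat.add_coe, PNat.sub_coe]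
  have := i.pos; have := k.pos
  split_ifs with h
  · omega
  · rw [← PNat.coe_lt_coe] at h; omega

lemma pnat_le_add_right (i j : ℕ+) : i ≤ i + j := by
  rw [← PNat.coe_le_coe]; push_cast; omega

lemma preimage_fin {γ δ : Type*} {φ : γ → δ} (hfib : ∀ y, {x | φ x = y}.Finite)
    {s : Set δ} (hs : s.Finite) : {x | φ x ∈ s}.Finite := by
  have h : {x | φ x ∈ s} = ⋃ y ∈ s, {x | φ x = y} := by ext x; simp
  rw [h]; exact hs.biUnion (fun y _ => hfib y)

lemma fiber_id (y : ℕ+) : {i : ℕ+ | i = y}.Finite := by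
  simp [Set.finite_singleton, Set.setOf_eq_eq_singleton]

lemma fiber_sub (k y : ℕ+) : {i : ℕ+ | i - k = y}.Finite :=
  pnat_finite_of_bdd (y + k) (fun i hi => by
    rw [Set.mem_setOf_eq] at hi; rw [← hi]; exact pnat_le_sub_add i k)

lemma fiber_pair_sum (y : ℕ+) : {q : ℕ+ × ℕ+ | q.1 + q.2 = y}.Finite := by
  apply Set.Finite.subset ((Set.finite_Iic y).prod (Set.finite_Iic y))
  rintro ⟨i, j⟩ hq
  rw [Set.mem_setOf_eq] at hq
  constructor
  · simpa using hq ▸ pnat_le_add_right i j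
  · simpa using hq ▸ ((pnat_le_add_right j i).trans_eq (add_comm j i))

lemma fiber_pair_sum_sub (k y : ℕ+) : {q : ℕ+ × ℕ+ | q.1 + q.2 - k = y}.Finite := by
  apply Set.Finite.subset ((Set.finite_Iic (y + k)).prod (Set.finite_Iic (y + k)))
  rintro ⟨i, j⟩ hq
  rw [Set.mem_setOf_eq] at hq
  have h1 : i + j ≤ y + k := hq ▸ pnat_le_sub_add (i + j) k
  constructor
  · simpa using (pnat_le_add_right i j).trans h1
  · simpa using ((pnat_le_add_right j i).trans_eq (add_comm j i)).trans h1

lemma Vf_fin (f : A) : {i : ℕ+ | d i f ≠ 0}.Finite := by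
  apply Set.Finite.subset f.vars.finite_toSet
  intro i hi
  by_contra h
  exact hi (pderiv_eq_zero_of_notMem_vars h)

lemma Wf_fin (f : A) : {q : ℕ+ × ℕ+ | d q.1 (d q.2 f) ≠ 0}.Finite := by
  apply Set.Finite.subset <| (Vf_fin f).biUnion
    (fun j (_ : j ∈ {i : ℕ+ | d i f ≠ 0}) => ((Vf_fin (d j f)).prod (Set.finite_singleton j)))
  rintro ⟨i, j⟩ hq
  rw [Set.mem_setOf_eq] at hq
  have h2 : d j f ≠ 0 := fun h => hq (by show d i (d j f) = 0; rw [h]; simp [d])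
  exact Set.mem_biUnion h2 ⟨hq, rfl⟩

-- supports of summand families
lemma supp_d1 {M : Type*} [AddCommMonoid M] (f : A) (b : ℕ+ → ℕ+)
    (hb : ∀ y, {i : ℕ+ | b i = y}.Finite) (t : ℕ+ → A → M) (ht : ∀ i, t i 0 = 0) :
    (support fun i => t i (d (b i) f)).Finite := by
  apply Set.Finite.subset (preimage_fin hb (Vf_fin f))
  intro i hi
  simp only [mem_support] at hi
  simp only [Set.mem_setOf_eq]
  intro h
  exact hi (by rw [h]; exact ht i)

lemma supp_d2 {M : Type*} [AddCommMonoid M] (f : A) (u v : ℕ+ → ℕ+)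
    (hu : ∀ y, {i : ℕ+ | u i = y}.Finite) (hv : ∀ y, {i : ℕ+ | v i = y}.Finite)
    (t : ℕ+ × ℕ+ → A → M) (ht : ∀ q, t q 0 = 0) :
    (support fun q : ℕ+ × ℕ+ => t q (d (u q.1) (d (v q.2) f))).Finite := by
  have hfib : ∀ y : ℕ+ × ℕ+, {q : ℕ+ × ℕ+ | (u q.1, v q.2) = y}.Finite := by
    rintro ⟨y1, y2⟩
    apply Set.Finite.subset ((hu y1).prod (hv y2))
    rintro ⟨i, j⟩ hq
    simp only [Set.mem_setOf_eq, Prod.mk.injEq] at hq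
    exact ⟨hq.1, hq.2⟩
  apply Set.Finite.subset (preimage_fin hfib (Wf_fin f))
  intro q hq
  simp only [mem_support] at hq
  simp only [Set.mem_setOf_eq]
  intro h
  exact hq (by rw [h]; exact ht q)

-- §3 core commutation lemmas

lemma d_add (i : ℕ+) (x y : A) : d i (x + y) = d i x + d i y := map_add _ _ _
lemma d_zero (i : ℕ+) : d i (0 : A) = 0 := map_zero _
lemma d_smul (i : ℕ+) (r : R) (x : A) : d i (r • x) = r • d i x := by
  simp [d]

lemma d_p (a b : ℕ+) : d a (p b) = if a = b then 1 else 0 := by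
  by_cases h : a = b
  · subst h; simp [d, p]
  · simp [d, p, pderiv_X_of_ne (Ne.symm h), h]

lemma pnat_succ_ne_one (i : ℕ+) : i + 1 ≠ 1 := by
  intro h
  have : (1:ℕ+) < i + 1 := by rw [← PNat.coe_lt_coe]; push_cast; have := i.pos; omega
  exact absurd h (ne_of_gt this)

lemma supp_E₂ (f : A) : (support fun i : ℕ+ => ((i : ℕ) : R) • (p (i + 1) * d i f)).Finite :=
  supp_d1 f id (fun y => fiber_id y) (fun i x => ((i : ℕ) : R) • (p (i + 1) * x)) (by simp)

lemma E₂_add (f g : A) : E₂ (f + g) = E₂ f + E₂ g := by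
  unfold E₂
  rw [← finsum_add_distrib (supp_E₂ f) (supp_E₂ g)]
  apply finsum_congr
  intro i
  rw [d_add, mul_add, smul_add]

def E₂hom : A →+ A := AddMonoidHom.mk' E₂ E₂_add

lemma smul_finsumA {β : Type*} (r : R) (g : β → A) (hg : (support g).Finite) :
    r • ∑ᶠ x, g x = ∑ᶠ x, r • g x := (smulAddHom R A r).map_finsum hg

lemma mul_finsumA {β : Type*} (a : A) (g : β → A) (hg : (support g).Finite) :
    a * ∑ᶠ x, g x = ∑ᶠ x, a * g x := (AddMonoidHom.mulLeft a).map_finsum hg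

lemma d_finsum {β : Type*} (b : ℕ+) (g : β → A) (hg : (support g).Finite) :
    d b (∑ᶠ x, g x) = ∑ᶠ x, d b (g x) :=
  ((pderiv b : Derivation R A A).toLinearMap.toAddMonoidHom).map_finsum hg

lemma E₂_finsum {β : Type*} (g : β → A) (hg : (support g).Finite) :
    E₂ (∑ᶠ x, g x) = ∑ᶠ x, E₂ (g x) := E₂hom.map_finsum hg

lemma E₂_smul (r : R) (f : A) : E₂ (r • f) = r • E₂ f := by
  unfold E₂
  rw [smul_finsumA r _ (supp_E₂ f)]
  apply finsum_congr
  intro i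
  rw [d_smul, mul_smul_comm]
  exact smul_comm _ _ _

lemma pnat_sub_one_coe (b : ℕ+) (hb : b ≠ 1) : ((b - 1 : ℕ+) : ℕ) = (b : ℕ) - 1 := by
  rw [PNat.sub_coe, if_pos (lt_of_le_of_ne b.one_le (Ne.symm hb))]
  simp

lemma d_mul (i : ℕ+) (x y : A) : d i (x * y) = d i x * y + x * d i y := pderiv_mul

lemma dE (b : ℕ+) (f : A) :
    d b (E₂ f) = E₂ (d b f) + (((b : ℕ) : R) - 1) • d (b - 1) f := by
  have hs1 : (support fun i : ℕ+ => ((i : ℕ) : R) • ((if b = i + 1 then (1:A) else 0) * d i f)).Finite := by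
    apply Set.Finite.subset (Set.finite_singleton (b - 1))
    intro i hi
    simp only [mem_support] at hi
    by_contra hne
    have hne' : b ≠ i + 1 := fun h => hne (by rw [h, pnat_add_sub]; rfl)
    simp [hne'] at hi
  have hs2 : (support fun i : ℕ+ => ((i : ℕ) : R) • (p (i + 1) * d b (d i f))).Finite :=
    supp_d1 f id (fun y => fiber_id y)
      (fun i x => ((i : ℕ) : R) • (p (i + 1) * d b x))
      (by intro i; show ((i : ℕ) : R) • (p (i + 1) * d b (0:A)) = 0
          rw [d_zero, mul_zero, smul_zero])
  have step : ∀ i : ℕ+, d b (((i : ℕ) : R) • (p (i + 1) * d i f))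
      = ((i : ℕ) : R) • ((if b = i + 1 then (1:A) else 0) * d i f)
        + ((i : ℕ) : R) • (p (i + 1) * d b (d i f)) := by
    intro i
    rw [d_smul, d_mul, d_p, smul_add]
  have hA : (∑ᶠ i : ℕ+, ((i : ℕ) : R) • ((if b = i + 1 then (1:A) else 0) * d i f))
      = (((b : ℕ) : R) - 1) • d (b - 1) f := by
    by_cases hb : b = 1
    · subst hb
      have hz : ∀ i : ℕ+, ((i : ℕ) : R) • ((if (1:ℕ+) = i + 1 then (1:A) else 0) * d i f) = 0 := by
        intro i
        rw [if_neg (fun h => pnat_succ_ne_one i h.symm)]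
        simp
      rw [finsum_congr hz, finsum_zero]
      simp
    · have hb2 : b = b - 1 + 1 := (pnat_sub_add b hb).symm
      rw [finsum_eq_single _ (b - 1) ?side]
      · beta_reduce
        rw [if_pos hb2, one_mul]
        congr 1
        have h1 : (1:ℕ) ≤ (b:ℕ) := b.one_le
        simp [pnat_sub_one_coe b hb, Nat.cast_sub h1]
      case side =>
        intro i hi
        have hne : b ≠ i + 1 := fun h => hi (by rw [h, pnat_add_sub])
        simp [hne]
  have hB : (∑ᶠ i : ℕ+, ((i : ℕ) : R) • (p (i + 1) * d b (d i f)))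
      = ∑ᶠ i : ℕ+, ((i : ℕ) : R) • (p (i + 1) * d i (d b f)) :=
    finsum_congr (fun i => by rw [d_comm])
  unfold E₂
  rw [d_finsum b _ (supp_E₂ f), finsum_congr step, finsum_add_distrib hs1 hs2, hA, hB, add_comm]

lemma pE (a : ℕ+) (g : A) :
    E₂ (p a * g) = p a * E₂ g + ((a : ℕ) : R) • (p (a + 1) * g) := by
  have hs1 : (support fun k : ℕ+ => ((k : ℕ) : R) • (p (k + 1) * ((if k = a then (1:A) else 0) * g))).Finite := by
    apply Set.Finite.subset (Set.finite_singleton a)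
    intro k hk
    simp only [mem_support] at hk
    by_contra hne
    have hka : k ≠ a := by simpa using hne
    simp [hka] at hk
  have hs2 : (support fun k : ℕ+ => ((k : ℕ) : R) • (p (k + 1) * (p a * d k g))).Finite :=
    supp_d1 g id (fun y => fiber_id y)
      (fun k x => ((k : ℕ) : R) • (p (k + 1) * (p a * x)))
      (by intro k; show ((k : ℕ) : R) • (p (k + 1) * (p a * (0:A))) = 0
          rw [mul_zero, mul_zero, smul_zero])
  have step : ∀ k : ℕ+, ((k : ℕ) : R) • (p (k + 1) * d k (p a * g))
      = ((k : ℕ) : R) • (p (k + 1) * ((if k = a then (1:A) else 0) * g))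
        + ((k : ℕ) : R) • (p (k + 1) * (p a * d k g)) := by
    intro k
    rw [d_mul, d_p, mul_add, smul_add]
  have hA : (∑ᶠ k : ℕ+, ((k : ℕ) : R) • (p (k + 1) * ((if k = a then (1:A) else 0) * g)))
      = ((a : ℕ) : R) • (p (a + 1) * g) := by
    rw [finsum_eq_single _ a ?side2]
    · beta_reduce
      rw [if_pos rfl, one_mul]
    case side2 =>
      intro k hk
      simp [hk]
  have hB : (∑ᶠ k : ℕ+, ((k : ℕ) : R) • (p (k + 1) * (p a * d k g)))
      = p a * ∑ᶠ i : ℕ+, ((i : ℕ) : R) • (p (i + 1) * d i g) := by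
    rw [mul_finsumA _ _ (supp_E₂ g)]
    apply finsum_congr
    intro k
    rw [mul_smul_comm, mul_left_comm]
  unfold E₂
  rw [finsum_congr step, finsum_add_distrib hs1 hs2, hA, hB, add_comm]

-- §4 pointwise commutators
lemma LI (a b : ℕ+) (f : A) :
    p a * d b (E₂ f) - E₂ (p a * d b f)
      = (((b : ℕ) : R) - 1) • (p a * d (b - 1) f)
        - ((a : ℕ) : R) • (p (a + 1) * d b f) := by
  rw [dE, pE, mul_add, mul_smul_comm]
  abel

lemma LII (a b c : ℕ+) (f : A) :
    p a * d b (d c (E₂ f)) - E₂ (p a * d b (d c f))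
      = (((c : ℕ) : R) - 1) • (p a * d b (d (c - 1) f))
        + (((b : ℕ) : R) - 1) • (p a * d (b - 1) (d c f))
        - ((a : ℕ) : R) • (p (a + 1) * d b (d c f)) := by
  rw [dE c f, d_add, d_smul, dE b (d c f), pE a (d b (d c f))]
  rw [mul_add, mul_add, mul_smul_comm, mul_smul_comm]
  abel

lemma LIII (a b c : ℕ+) (f : A) :
    p a * p b * d c (E₂ f) - E₂ (p a * p b * d c f)
      = (((c : ℕ) : R) - 1) • (p a * p b * d (c - 1) f)
        - ((a : ℕ) : R) • (p (a + 1) * p b * d c f)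
        - ((b : ℕ) : R) • (p a * p (b + 1) * d c f) := by
  have h1 : E₂ (p a * p b * d c f) = p a * p b * E₂ (d c f)
      + ((b : ℕ) : R) • (p a * (p (b + 1) * d c f))
      + ((a : ℕ) : R) • (p (a + 1) * (p b * d c f)) := by
    rw [mul_assoc, pE a (p b * d c f), pE b (d c f), mul_add, mul_smul_comm, ← mul_assoc]
  rw [dE c f, h1, mul_add, mul_smul_comm, ← mul_assoc, ← mul_assoc]
  abel

-- §5 double finsum machinery
lemma supp_outer {t : ℕ+ → ℕ+ → A} (ht : (support fun q : ℕ+ × ℕ+ => t q.1 q.2).Finite) :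
    (support fun i => ∑ᶠ j, t i j).Finite := by
  apply Set.Finite.subset (ht.image Prod.fst)
  intro i hi
  simp only [mem_support] at hi
  by_contra h
  apply hi
  have hz : ∀ j, t i j = 0 := by
    intro j
    by_contra hj
    exact h ⟨(i, j), hj, rfl⟩
  rw [finsum_congr hz, finsum_zero]

lemma supp_inner {t : ℕ+ → ℕ+ → A} (ht : (support fun q : ℕ+ × ℕ+ => t q.1 q.2).Finite)
    (i : ℕ+) : (support (t i)).Finite := by
  apply Set.Finite.subset (ht.image Prod.snd)
  intro j hj
  exact ⟨(i, j), hj, rfl⟩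

lemma finsum2_sub (t s : ℕ+ → ℕ+ → A)
    (ht : (support fun q : ℕ+ × ℕ+ => t q.1 q.2).Finite)
    (hs : (support fun q : ℕ+ × ℕ+ => s q.1 q.2).Finite) :
    (∑ᶠ i, ∑ᶠ j, t i j) - (∑ᶠ i, ∑ᶠ j, s i j) = ∑ᶠ i, ∑ᶠ j, (t i j - s i j) := by
  rw [← finsum_sub_distrib (supp_outer ht) (supp_outer hs)]
  apply finsum_congr
  intro i
  rw [← finsum_sub_distrib (supp_inner ht i) (supp_inner hs i)]

lemma finsum2_add (t s : ℕ+ → ℕ+ → A)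
    (ht : (support fun q : ℕ+ × ℕ+ => t q.1 q.2).Finite)
    (hs : (support fun q : ℕ+ × ℕ+ => s q.1 q.2).Finite) :
    (∑ᶠ i, ∑ᶠ j, t i j) + (∑ᶠ i, ∑ᶠ j, s i j) = ∑ᶠ i, ∑ᶠ j, (t i j + s i j) := by
  rw [← finsum_add_distrib (supp_outer ht) (supp_outer hs)]
  apply finsum_congr
  intro i
  rw [← finsum_add_distrib (supp_inner ht i) (supp_inner hs i)]

lemma E₂_finsum2 (t : ℕ+ → ℕ+ → A)
    (ht : (support fun q : ℕ+ × ℕ+ => t q.1 q.2).Finite) :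
    E₂ (∑ᶠ i, ∑ᶠ j, t i j) = ∑ᶠ i, ∑ᶠ j, E₂ (t i j) := by
  rw [E₂_finsum _ (supp_outer ht)]
  apply finsum_congr
  intro i
  rw [E₂_finsum _ (supp_inner ht i)]

lemma supp_pair_add {γ : Type*} {t s : γ → A}
    (ht : (support t).Finite) (hs : (support s).Finite) :
    (support fun q => t q + s q).Finite := by
  apply Set.Finite.subset (ht.union hs)
  exact support_add _ _

-- §6 summed commutators
lemma E₂_zero : E₂ (0 : A) = 0 := map_zero E₂hom

lemma suppE {β : Type*} {g : β → A} (hg : (support g).Finite) :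
    (support fun x => E₂ (g x)).Finite := by
  apply Set.Finite.subset hg
  intro x hx
  simp only [mem_support] at hx ⊢
  intro h
  exact hx (by rw [h, E₂_zero])

lemma suppM (f : A) (c : ℕ+ → R) (ap : ℕ+ → ℕ+) (b : ℕ+ → ℕ+)
    (hb : ∀ y, {i : ℕ+ | b i = y}.Finite) :
    (support fun i => c i • (p (ap i) * d (b i) f)).Finite :=
  supp_d1 f b hb (fun i x => c i • (p (ap i) * x))
    (fun i => by show c i • (p (ap i) * (0:A)) = 0; rw [mul_zero, smul_zero])

lemma suppM2 (f : A) (c : ℕ+ → ℕ+ → R) (ap : ℕ+ → ℕ+ → ℕ+) (u v : ℕ+ → ℕ+)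
    (hu : ∀ y, {i : ℕ+ | u i = y}.Finite) (hv : ∀ y, {i : ℕ+ | v i = y}.Finite) :
    (support fun q : ℕ+ × ℕ+ => c q.1 q.2 • (p (ap q.1 q.2) * d (u q.1) (d (v q.2) f))).Finite :=
  supp_d2 f u v hu hv (fun q x => c q.1 q.2 • (p (ap q.1 q.2) * x))
    (fun q => by show c q.1 q.2 • (p (ap q.1 q.2) * (0:A)) = 0; rw [mul_zero, smul_zero])

lemma fiber_comp {γ : Type*} {φ : γ → ℕ+} (hφ : ∀ y, {x | φ x = y}.Finite)
    (ψ : ℕ+ → ℕ+) (hψ : ∀ y, {i : ℕ+ | ψ i = y}.Finite) :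
    ∀ y, {x | ψ (φ x) = y}.Finite := fun y => preimage_fin hφ (hψ y)

lemma suppM3 (f : A) (c : ℕ+ → ℕ+ → R) (m : ℕ+ → ℕ+ → A) (h : ℕ+ → ℕ+ → ℕ+)
    (hh : ∀ y, {q : ℕ+ × ℕ+ | h q.1 q.2 = y}.Finite) :
    (support fun q : ℕ+ × ℕ+ => c q.1 q.2 • (m q.1 q.2 * d (h q.1 q.2) f)).Finite := by
  apply Set.Finite.subset (preimage_fin (φ := fun q : ℕ+ × ℕ+ => h q.1 q.2) hh (Vf_fin f))
  intro q hq
  simp only [mem_support] at hq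
  simp only [Set.mem_setOf_eq]
  intro hz
  exact hq (by rw [hz, mul_zero, smul_zero])

lemma supp_pair_sub {γ : Type*} {t s : γ → A}
    (ht : (support t).Finite) (hs : (support s).Finite) :
    (support fun q => t q - s q).Finite := by
  apply Set.Finite.subset (ht.union hs)
  exact support_sub _ _

lemma finsum2_congr {t s : ℕ+ → ℕ+ → A} (h : ∀ i j, t i j = s i j) :
    (∑ᶠ i, ∑ᶠ j, t i j) = ∑ᶠ i, ∑ᶠ j, s i j :=
  finsum_congr (fun i => finsum_congr (h i))

lemma C1 (c : ℕ+ → R) (a : ℕ+ → ℕ+) (f : A) :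
    (∑ᶠ i, c i • (p (a i) * d i (E₂ f))) - E₂ (∑ᶠ i, c i • (p (a i) * d i f))
      = (∑ᶠ i, (c i * (((i : ℕ) : R) - 1)) • (p (a i) * d (i - 1) f))
        - (∑ᶠ i, (c i * ((a i : ℕ) : R)) • (p (a i + 1) * d i f)) := by
  have hsf : (support fun i => c i • (p (a i) * d i f)).Finite :=
    suppM f c a id (fun y => fiber_id y)
  have hsE : (support fun i => c i • (p (a i) * d i (E₂ f))).Finite :=
    suppM (E₂ f) c a id (fun y => fiber_id y)
  rw [E₂_finsum _ hsf, ← finsum_sub_distrib hsE (suppE hsf)]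
  have step : ∀ i : ℕ+, c i • (p (a i) * d i (E₂ f)) - E₂ (c i • (p (a i) * d i f))
      = (c i * (((i : ℕ) : R) - 1)) • (p (a i) * d (i - 1) f)
        - (c i * ((a i : ℕ) : R)) • (p (a i + 1) * d i f) := by
    intro i
    rw [E₂_smul, ← smul_sub, LI (a i) i f, smul_sub, smul_smul, smul_smul]
  have h1 : (support fun i => (c i * (((i : ℕ) : R) - 1)) • (p (a i) * d (i - 1) f)).Finite :=
    suppM f _ a (fun i => i - 1) (fiber_sub 1)
  have h2 : (support fun i => (c i * ((a i : ℕ) : R)) • (p (a i + 1) * d i f)).Finite :=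
    suppM f _ (fun i => a i + 1) id (fun y => fiber_id y)
  rw [finsum_congr step, finsum_sub_distrib h1 h2]

lemma C2 (c : ℕ+ → ℕ+ → R) (g : ℕ+ → ℕ+ → ℕ+) (f : A) :
    (∑ᶠ i, ∑ᶠ j, c i j • (p (g i j) * d i (d j (E₂ f))))
      - E₂ (∑ᶠ i, ∑ᶠ j, c i j • (p (g i j) * d i (d j f)))
    = (∑ᶠ i, ∑ᶠ j, (c i j * (((j : ℕ) : R) - 1)) • (p (g i j) * d i (d (j - 1) f)))
      + (∑ᶠ i, ∑ᶠ j, (c i j * (((i : ℕ) : R) - 1)) • (p (g i j) * d (i - 1) (d j f)))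
      - (∑ᶠ i, ∑ᶠ j, (c i j * ((g i j : ℕ) : R)) • (p (g i j + 1) * d i (d j f))) := by
  have hsf : (support fun q : ℕ+ × ℕ+ => c q.1 q.2 • (p (g q.1 q.2) * d q.1 (d q.2 f))).Finite :=
    suppM2 f c g id id (fun y => fiber_id y) (fun y => fiber_id y)
  have hsE : (support fun q : ℕ+ × ℕ+ =>
      c q.1 q.2 • (p (g q.1 q.2) * d q.1 (d q.2 (E₂ f)))).Finite :=
    suppM2 (E₂ f) c g id id (fun y => fiber_id y) (fun y => fiber_id y)
  have hY : (support fun q : ℕ+ × ℕ+ =>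
      (c q.1 q.2 * (((q.2 : ℕ) : R) - 1)) • (p (g q.1 q.2) * d q.1 (d (q.2 - 1) f))).Finite :=
    suppM2 f (fun i j => c i j * (((j : ℕ) : R) - 1)) g id (fun j => j - 1)
      (fun y => fiber_id y) (fiber_sub 1)
  have hZ : (support fun q : ℕ+ × ℕ+ =>
      (c q.1 q.2 * (((q.1 : ℕ) : R) - 1)) • (p (g q.1 q.2) * d (q.1 - 1) (d q.2 f))).Finite :=
    suppM2 f (fun i j => c i j * (((i : ℕ) : R) - 1)) g (fun i => i - 1) id
      (fiber_sub 1) (fun y => fiber_id y)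
  have hW : (support fun q : ℕ+ × ℕ+ =>
      (c q.1 q.2 * ((g q.1 q.2 : ℕ) : R)) • (p (g q.1 q.2 + 1) * d q.1 (d q.2 f))).Finite :=
    suppM2 f (fun i j => c i j * ((g i j : ℕ) : R)) (fun i j => g i j + 1) id id
      (fun y => fiber_id y) (fun y => fiber_id y)
  have step : ∀ i j : ℕ+,
      c i j • (p (g i j) * d i (d j (E₂ f))) - E₂ (c i j • (p (g i j) * d i (d j f)))
      = ((c i j * (((j : ℕ) : R) - 1)) • (p (g i j) * d i (d (j - 1) f))
          + (c i j * (((i : ℕ) : R) - 1)) • (p (g i j) * d (i - 1) (d j f)))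
        - (c i j * ((g i j : ℕ) : R)) • (p (g i j + 1) * d i (d j f)) := by
    intro i j
    rw [E₂_smul, ← smul_sub, LII (g i j) i j f, smul_sub, smul_add, smul_smul, smul_smul,
      smul_smul]
  have e1 : E₂ (∑ᶠ i, ∑ᶠ j, c i j • (p (g i j) * d i (d j f))) = ∑ᶠ i, ∑ᶠ j, E₂ (c i j • (p (g i j) * d i (d j f))) := E₂_finsum2 _ hsf
  have e2 : (∑ᶠ i, ∑ᶠ j, ((c i j * (((j : ℕ) : R) - 1)) • (p (g i j) * d i (d (j - 1) f))
          + (c i j * (((i : ℕ) : R) - 1)) • (p (g i j) * d (i - 1) (d j f))))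
        - (∑ᶠ i, ∑ᶠ j, (c i j * ((g i j : ℕ) : R)) • (p (g i j + 1) * d i (d j f)))
      = ∑ᶠ i, ∑ᶠ j, (((c i j * (((j : ℕ) : R) - 1)) • (p (g i j) * d i (d (j - 1) f))
          + (c i j * (((i : ℕ) : R) - 1)) • (p (g i j) * d (i - 1) (d j f)))
        - (c i j * ((g i j : ℕ) : R)) • (p (g i j + 1) * d i (d j f))) := finsum2_sub _ _ (supp_pair_add hY hZ) hW
  calc (∑ᶠ i, ∑ᶠ j, c i j • (p (g i j) * d i (d j (E₂ f)))) - E₂ (∑ᶠ i, ∑ᶠ j, c i j • (p (g i j) * d i (d j f)))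
      = (∑ᶠ i, ∑ᶠ j, c i j • (p (g i j) * d i (d j (E₂ f)))) - ∑ᶠ i, ∑ᶠ j, E₂ (c i j • (p (g i j) * d i (d j f))) := by rw [e1]
    _ = ∑ᶠ i, ∑ᶠ j, (c i j • (p (g i j) * d i (d j (E₂ f))) - E₂ (c i j • (p (g i j) * d i (d j f)))) := finsum2_sub _ _ hsE (suppE hsf)
    _ = ∑ᶠ i, ∑ᶠ j, (((c i j * (((j : ℕ) : R) - 1)) • (p (g i j) * d i (d (j - 1) f))
          + (c i j * (((i : ℕ) : R) - 1)) • (p (g i j) * d (i - 1) (d j f)))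
        - (c i j * ((g i j : ℕ) : R)) • (p (g i j + 1) * d i (d j f))) := finsum2_congr step
    _ = (∑ᶠ i, ∑ᶠ j, ((c i j * (((j : ℕ) : R) - 1)) • (p (g i j) * d i (d (j - 1) f))
          + (c i j * (((i : ℕ) : R) - 1)) • (p (g i j) * d (i - 1) (d j f))))
        - ∑ᶠ i, ∑ᶠ j, (c i j * ((g i j : ℕ) : R)) • (p (g i j + 1) * d i (d j f)) := e2.symm
    _ = ((∑ᶠ i, ∑ᶠ j, (c i j * (((j : ℕ) : R) - 1)) • (p (g i j) * d i (d (j - 1) f)))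
          + ∑ᶠ i, ∑ᶠ j, (c i j * (((i : ℕ) : R) - 1)) • (p (g i j) * d (i - 1) (d j f)))
        - ∑ᶠ i, ∑ᶠ j, (c i j * ((g i j : ℕ) : R)) • (p (g i j + 1) * d i (d j f)) :=
      (congrArg (fun z => z - ∑ᶠ i, ∑ᶠ j, (c i j * ((g i j : ℕ) : R)) • (p (g i j + 1) * d i (d j f))) (finsum2_add _ _ hY hZ)).symm

lemma C3 (c : ℕ+ → ℕ+ → R) (h : ℕ+ → ℕ+ → ℕ+)
    (hh : ∀ y, {q : ℕ+ × ℕ+ | h q.1 q.2 = y}.Finite) (f : A) :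
    (∑ᶠ i, ∑ᶠ j, c i j • (p i * p j * d (h i j) (E₂ f)))
      - E₂ (∑ᶠ i, ∑ᶠ j, c i j • (p i * p j * d (h i j) f))
    = (∑ᶠ i, ∑ᶠ j, (c i j * (((h i j : ℕ) : R) - 1)) • (p i * p j * d (h i j - 1) f))
      - (∑ᶠ i, ∑ᶠ j, (c i j * ((i : ℕ) : R)) • (p (i + 1) * p j * d (h i j) f))
      - (∑ᶠ i, ∑ᶠ j, (c i j * ((j : ℕ) : R)) • (p i * p (j + 1) * d (h i j) f)) := by
  have hh' : ∀ y, {q : ℕ+ × ℕ+ | h q.1 q.2 - 1 = y}.Finite :=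
    fiber_comp (φ := fun q : ℕ+ × ℕ+ => h q.1 q.2) hh (fun i => i - 1) (fiber_sub 1)
  have hsf : (support fun q : ℕ+ × ℕ+ =>
      c q.1 q.2 • (p q.1 * p q.2 * d (h q.1 q.2) f)).Finite :=
    suppM3 f c (fun i j => p i * p j) h hh
  have hsE : (support fun q : ℕ+ × ℕ+ =>
      c q.1 q.2 • (p q.1 * p q.2 * d (h q.1 q.2) (E₂ f))).Finite :=
    suppM3 (E₂ f) c (fun i j => p i * p j) h hh
  have hX : (support fun q : ℕ+ × ℕ+ =>
      (c q.1 q.2 * (((h q.1 q.2 : ℕ) : R) - 1)) • (p q.1 * p q.2 * d (h q.1 q.2 - 1) f)).Finite :=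
    suppM3 f (fun i j => c i j * (((h i j : ℕ) : R) - 1)) (fun i j => p i * p j)
      (fun i j => h i j - 1) hh'
  have hY : (support fun q : ℕ+ × ℕ+ =>
      (c q.1 q.2 * ((q.1 : ℕ) : R)) • (p (q.1 + 1) * p q.2 * d (h q.1 q.2) f)).Finite :=
    suppM3 f (fun i j => c i j * ((i : ℕ) : R)) (fun i j => p (i + 1) * p j) h hh
  have hZ : (support fun q : ℕ+ × ℕ+ =>
      (c q.1 q.2 * ((q.2 : ℕ) : R)) • (p q.1 * p (q.2 + 1) * d (h q.1 q.2) f)).Finite :=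
    suppM3 f (fun i j => c i j * ((j : ℕ) : R)) (fun i j => p i * p (j + 1)) h hh
  have step : ∀ i j : ℕ+,
      c i j • (p i * p j * d (h i j) (E₂ f)) - E₂ (c i j • (p i * p j * d (h i j) f))
      = (c i j * (((h i j : ℕ) : R) - 1)) • (p i * p j * d (h i j - 1) f)
        - (c i j * ((i : ℕ) : R)) • (p (i + 1) * p j * d (h i j) f)
        - (c i j * ((j : ℕ) : R)) • (p i * p (j + 1) * d (h i j) f) := by
    intro i j
    rw [E₂_smul, ← smul_sub, LIII i j (h i j) f, smul_sub, smul_sub, smul_smul, smul_smul,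
      smul_smul]
  have e1 : E₂ (∑ᶠ i, ∑ᶠ j, c i j • (p i * p j * d (h i j) f)) = ∑ᶠ i, ∑ᶠ j, E₂ (c i j • (p i * p j * d (h i j) f)) := E₂_finsum2 _ hsf
  have e2 : (∑ᶠ i, ∑ᶠ j, ((c i j * (((h i j : ℕ) : R) - 1)) • (p i * p j * d (h i j - 1) f)
        - (c i j * ((i : ℕ) : R)) • (p (i + 1) * p j * d (h i j) f)))
        - (∑ᶠ i, ∑ᶠ j, (c i j * ((j : ℕ) : R)) • (p i * p (j + 1) * d (h i j) f))
      = ∑ᶠ i, ∑ᶠ j, ((c i j * (((h i j : ℕ) : R) - 1)) • (p i * p j * d (h i j - 1) f)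
        - (c i j * ((i : ℕ) : R)) • (p (i + 1) * p j * d (h i j) f)
        - (c i j * ((j : ℕ) : R)) • (p i * p (j + 1) * d (h i j) f)) := finsum2_sub _ _ (supp_pair_sub hX hY) hZ
  calc (∑ᶠ i, ∑ᶠ j, c i j • (p i * p j * d (h i j) (E₂ f))) - E₂ (∑ᶠ i, ∑ᶠ j, c i j • (p i * p j * d (h i j) f))
      = (∑ᶠ i, ∑ᶠ j, c i j • (p i * p j * d (h i j) (E₂ f))) - ∑ᶠ i, ∑ᶠ j, E₂ (c i j • (p i * p j * d (h i j) f)) := by rw [e1]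
    _ = ∑ᶠ i, ∑ᶠ j, (c i j • (p i * p j * d (h i j) (E₂ f)) - E₂ (c i j • (p i * p j * d (h i j) f))) := finsum2_sub _ _ hsE (suppE hsf)
    _ = ∑ᶠ i, ∑ᶠ j, ((c i j * (((h i j : ℕ) : R) - 1)) • (p i * p j * d (h i j - 1) f)
        - (c i j * ((i : ℕ) : R)) • (p (i + 1) * p j * d (h i j) f)
        - (c i j * ((j : ℕ) : R)) • (p i * p (j + 1) * d (h i j) f)) := finsum2_congr step
    _ = (∑ᶠ i, ∑ᶠ j, ((c i j * (((h i j : ℕ) : R) - 1)) • (p i * p j * d (h i j - 1) f)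
        - (c i j * ((i : ℕ) : R)) • (p (i + 1) * p j * d (h i j) f)))
        - ∑ᶠ i, ∑ᶠ j, (c i j * ((j : ℕ) : R)) • (p i * p (j + 1) * d (h i j) f) := e2.symm
    _ = ((∑ᶠ i, ∑ᶠ j, (c i j * (((h i j : ℕ) : R) - 1)) • (p i * p j * d (h i j - 1) f))
        - ∑ᶠ i, ∑ᶠ j, (c i j * ((i : ℕ) : R)) • (p (i + 1) * p j * d (h i j) f))
        - ∑ᶠ i, ∑ᶠ j, (c i j * ((j : ℕ) : R)) • (p i * p (j + 1) * d (h i j) f) :=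
      (congrArg (fun z => z - ∑ᶠ i, ∑ᶠ j, (c i j * ((j : ℕ) : R)) • (p i * p (j + 1) * d (h i j) f)) (finsum2_sub _ _ hX hY)).symm

-- §7 assembly helpers
lemma half2 : (Polynomial.C (1/2 : ℚ) : R) * 2 = 1 := by
  have h : Polynomial.C (2 : ℚ) = (2 : R) := map_ofNat _ 2
  rw [← h, ← Polynomial.C_mul]
  norm_num

lemma pnat_coe_succ (i : ℕ+) : (((i + 1 : ℕ+) : ℕ) : R) = ((i : ℕ) : R) + 1 := by
  push_cast
  ring

lemma P1Δ (f : A) :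
    (Polynomial.C (1/2 : ℚ) * (α - 1)) •
      ((∑ᶠ i : ℕ+, (((i : ℕ) : R) * (((i : ℕ) : R) - 1) * (((i : ℕ) : R) - 1)) • (p i * d (i - 1) f))
        - ∑ᶠ i : ℕ+, (((i : ℕ) : R) * (((i : ℕ) : R) - 1) * ((i : ℕ) : R)) • (p (i + 1) * d i f))
    = (α - 1) • (∑ᶠ i : ℕ+, (((i : ℕ) : R) * ((i : ℕ) : R)) • (p (i + 1) * d i f)) := by
  have hs1 : (support fun i : ℕ+ =>
      ((((i : ℕ) : R) + 1) * ((i : ℕ) : R) * ((i : ℕ) : R)) • (p (i + 1) * d i f)).Finite :=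
    suppM f _ (fun i => i + 1) id (fun y => fiber_id y)
  have hs2 : (support fun i : ℕ+ =>
      (((i : ℕ) : R) * (((i : ℕ) : R) - 1) * ((i : ℕ) : R)) • (p (i + 1) * d i f)).Finite :=
    suppM f _ (fun i => i + 1) id (fun y => fiber_id y)
  have hs3 : (support fun i : ℕ+ =>
      (2 * (((i : ℕ) : R) * ((i : ℕ) : R))) • (p (i + 1) * d i f)).Finite :=
    suppM f _ (fun i => i + 1) id (fun y => fiber_id y)
  have hs4 : (support fun i : ℕ+ =>
      (((i : ℕ) : R) * ((i : ℕ) : R)) • (p (i + 1) * d i f)).Finite :=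
    suppM f _ (fun i => i + 1) id (fun y => fiber_id y)
  have hsh : (∑ᶠ i : ℕ+, (((i : ℕ) : R) * (((i : ℕ) : R) - 1) * (((i : ℕ) : R) - 1)) • (p i * d (i - 1) f))
      = ∑ᶠ i : ℕ+, ((((i : ℕ) : R) + 1) * ((i : ℕ) : R) * ((i : ℕ) : R)) • (p (i + 1) * d i f) := by
    rw [finsum_pnat_shift
      (fun i : ℕ+ => (((i : ℕ) : R) * (((i : ℕ) : R) - 1) * (((i : ℕ) : R) - 1)) • (p i * d (i - 1) f))
      (by simp)]
    apply finsum_congr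
    intro i
    rw [pnat_add_sub, pnat_coe_succ]
    congr 1
    ring
  have hcomb : (∑ᶠ i : ℕ+, ((((i : ℕ) : R) + 1) * ((i : ℕ) : R) * ((i : ℕ) : R)) • (p (i + 1) * d i f))
      - (∑ᶠ i : ℕ+, (((i : ℕ) : R) * (((i : ℕ) : R) - 1) * ((i : ℕ) : R)) • (p (i + 1) * d i f))
      = ∑ᶠ i : ℕ+, (2 * (((i : ℕ) : R) * ((i : ℕ) : R))) • (p (i + 1) * d i f) := by
    rw [← finsum_sub_distrib hs1 hs2]
    apply finsum_congr
    intro i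
    rw [← sub_smul]
    congr 1
    ring
  have hpull : (Polynomial.C (1/2 : ℚ) * (α - 1)) •
        (∑ᶠ i : ℕ+, (2 * (((i : ℕ) : R) * ((i : ℕ) : R))) • (p (i + 1) * d i f))
      = ∑ᶠ i : ℕ+, ((Polynomial.C (1/2 : ℚ) * (α - 1)) •
          ((2 * (((i : ℕ) : R) * ((i : ℕ) : R))) • (p (i + 1) * d i f))) :=
    smul_finsumA _ _ hs3
  have hpull2 : (α - 1) • (∑ᶠ i : ℕ+, (((i : ℕ) : R) * ((i : ℕ) : R)) • (p (i + 1) * d i f))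
      = ∑ᶠ i : ℕ+, ((α - 1) • ((((i : ℕ) : R) * ((i : ℕ) : R)) • (p (i + 1) * d i f))) :=
    smul_finsumA _ _ hs4
  rw [hsh, hcomb, hpull, hpull2]
  apply finsum_congr
  intro i
  rw [smul_smul, smul_smul]
  congr 1
  have h : Polynomial.C (1/2 : ℚ) * (α - 1) * (2 * (((i : ℕ) : R) * ((i : ℕ) : R)))
      = (Polynomial.C (1/2 : ℚ) * 2) * ((α - 1) * (((i : ℕ) : R) * ((i : ℕ) : R))) := by ring
  rw [h, half2, one_mul]

lemma finsum2_shift_inner (F : ℕ+ → ℕ+ → A) (h : ∀ i, F i 1 = 0) :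
    (∑ᶠ i : ℕ+, ∑ᶠ j : ℕ+, F i j) = ∑ᶠ i : ℕ+, ∑ᶠ j : ℕ+, F i (j + 1) :=
  finsum_congr (fun i => finsum_pnat_shift (F i) (h i))

lemma finsum2_shift_outer (F : ℕ+ → ℕ+ → A) (h : ∀ j, F 1 j = 0) :
    (∑ᶠ i : ℕ+, ∑ᶠ j : ℕ+, F i j) = ∑ᶠ i : ℕ+, ∑ᶠ j : ℕ+, F (i + 1) j :=
  finsum_pnat_shift (fun i => ∑ᶠ j : ℕ+, F i j)
    (by show (∑ᶠ j : ℕ+, F 1 j) = 0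
        rw [finsum_congr h]; exact finsum_zero)

lemma smul_finsum2 (w : R) (F : ℕ+ → ℕ+ → A)
    (hF : (support fun q : ℕ+ × ℕ+ => F q.1 q.2).Finite) :
    w • (∑ᶠ i : ℕ+, ∑ᶠ j : ℕ+, F i j) = ∑ᶠ i : ℕ+, ∑ᶠ j : ℕ+, w • F i j := by
  rw [smul_finsumA w _ (supp_outer hF)]
  exact finsum_congr (fun i => smul_finsumA w _ (supp_inner hF i))

lemma pnat_coe_add (i j : ℕ+) : (((i + j : ℕ+) : ℕ) : R) = ((i : ℕ) : R) + ((j : ℕ) : R) := by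
  push_cast
  ring

lemma pnat_coe_sub' (a b : ℕ+) : ((a - b : ℕ+) : ℕ) = max 1 ((a : ℕ) - (b : ℕ)) := by
  rw [PNat.sub_coe]
  split_ifs with h
  · rw [← PNat.coe_lt_coe] at h; omega
  · rw [← PNat.coe_lt_coe] at h; omega

lemma suppM2' (f : A) (c : ℕ+ × ℕ+ → R) (ap : ℕ+ × ℕ+ → ℕ+) (u v : ℕ+ → ℕ+)
    (hu : ∀ y, {i : ℕ+ | u i = y}.Finite) (hv : ∀ y, {i : ℕ+ | v i = y}.Finite) :
    (support fun q : ℕ+ × ℕ+ => c q • (p (ap q) * d (u q.1) (d (v q.2) f))).Finite :=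
  supp_d2 f u v hu hv (fun q x => c q • (p (ap q) * x))
    (fun q => by show c q • (p (ap q) * (0:A)) = 0; rw [mul_zero, smul_zero])

lemma suppM3' (f : A) (c : ℕ+ × ℕ+ → R) (m : ℕ+ × ℕ+ → A) (h : ℕ+ × ℕ+ → ℕ+)
    (hh : ∀ y, {q : ℕ+ × ℕ+ | h q = y}.Finite) :
    (support fun q : ℕ+ × ℕ+ => c q • (m q * d (h q) f)).Finite := by
  apply Set.Finite.subset (preimage_fin (φ := h) hh (Vf_fin f))
  intro q hq
  simp only [mem_support] at hq
  simp only [Set.mem_setOf_eq]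
  intro hz
  exact hq (by rw [hz, mul_zero, smul_zero])

lemma P2Δ (f : A) :
    (Polynomial.C (1/2 : ℚ) * α) •
      (((∑ᶠ i : ℕ+, ∑ᶠ j : ℕ+, ((((i : ℕ) : R) * ((j : ℕ) : R)) * (((j : ℕ) : R) - 1)) •
            (p (i + j) * d i (d (j - 1) f)))
          + ∑ᶠ i : ℕ+, ∑ᶠ j : ℕ+, ((((i : ℕ) : R) * ((j : ℕ) : R)) * (((i : ℕ) : R) - 1)) •
            (p (i + j) * d (i - 1) (d j f)))
        - ∑ᶠ i : ℕ+, ∑ᶠ j : ℕ+, ((((i : ℕ) : R) * ((j : ℕ) : R)) * (((i + j : ℕ+) : ℕ) : R)) •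
            (p (i + j + 1) * d i (d j f)))
    = α • (∑ᶠ i : ℕ+, ∑ᶠ j : ℕ+, (((i : ℕ) : R) * ((j : ℕ) : R)) • (p (i + j + 1) * d i (d j f))) := by
  have hY : (support fun q : ℕ+ × ℕ+ =>
      ((((q.1 : ℕ) : R) * (((q.2 : ℕ) : R) + 1)) * ((q.2 : ℕ) : R)) •
        (p (q.1 + q.2 + 1) * d q.1 (d q.2 f))).Finite :=
    suppM2' f _ (fun q => q.1 + q.2 + 1) id id (fun y => fiber_id y) (fun y => fiber_id y)
  have hZ : (support fun q : ℕ+ × ℕ+ =>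
      (((((q.1 : ℕ) : R) + 1) * ((q.2 : ℕ) : R)) * ((q.1 : ℕ) : R)) •
        (p (q.1 + q.2 + 1) * d q.1 (d q.2 f))).Finite :=
    suppM2' f _ (fun q => q.1 + q.2 + 1) id id (fun y => fiber_id y) (fun y => fiber_id y)
  have hW : (support fun q : ℕ+ × ℕ+ =>
      ((((q.1 : ℕ) : R) * ((q.2 : ℕ) : R)) * (((q.1 : ℕ) : R) + ((q.2 : ℕ) : R))) •
        (p (q.1 + q.2 + 1) * d q.1 (d q.2 f))).Finite :=
    suppM2' f _ (fun q => q.1 + q.2 + 1) id id (fun y => fiber_id y) (fun y => fiber_id y)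
  have hV : (support fun q : ℕ+ × ℕ+ =>
      (2 * (((q.1 : ℕ) : R) * ((q.2 : ℕ) : R))) •
        (p (q.1 + q.2 + 1) * d q.1 (d q.2 f))).Finite :=
    suppM2' f _ (fun q => q.1 + q.2 + 1) id id (fun y => fiber_id y) (fun y => fiber_id y)
  have hT : (support fun q : ℕ+ × ℕ+ =>
      (((q.1 : ℕ) : R) * ((q.2 : ℕ) : R)) •
        (p (q.1 + q.2 + 1) * d q.1 (d q.2 f))).Finite :=
    suppM2' f _ (fun q => q.1 + q.2 + 1) id id (fun y => fiber_id y) (fun y => fiber_id y)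
  -- shift the first sum in j
  have hshY : (∑ᶠ i : ℕ+, ∑ᶠ j : ℕ+, ((((i : ℕ) : R) * ((j : ℕ) : R)) * (((j : ℕ) : R) - 1)) •
        (p (i + j) * d i (d (j - 1) f)))
      = ∑ᶠ i : ℕ+, ∑ᶠ j : ℕ+, ((((i : ℕ) : R) * (((j : ℕ) : R) + 1)) * ((j : ℕ) : R)) •
        (p (i + j + 1) * d i (d j f)) := by
    refine (finsum2_shift_inner
      (fun i j => ((((i : ℕ) : R) * ((j : ℕ) : R)) * (((j : ℕ) : R) - 1)) •
        (p (i + j) * d i (d (j - 1) f))) (by intro i; simp)).trans (finsum2_congr ?_)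
    intro i j
    show ((((i : ℕ) : R) * (((j + 1 : ℕ+) : ℕ) : R)) * ((((j + 1 : ℕ+) : ℕ) : R) - 1)) •
        (p (i + (j + 1)) * d i (d (j + 1 - 1) f)) = _
    rw [pnat_add_sub, pnat_coe_succ, ← add_assoc]
    congr 1
    ring
  -- shift the second sum in i
  have hshZ : (∑ᶠ i : ℕ+, ∑ᶠ j : ℕ+, ((((i : ℕ) : R) * ((j : ℕ) : R)) * (((i : ℕ) : R) - 1)) •
        (p (i + j) * d (i - 1) (d j f)))
      = ∑ᶠ i : ℕ+, ∑ᶠ j : ℕ+, (((((i : ℕ) : R) + 1) * ((j : ℕ) : R)) * ((i : ℕ) : R)) •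
        (p (i + j + 1) * d i (d j f)) := by
    refine (finsum2_shift_outer
      (fun i j => ((((i : ℕ) : R) * ((j : ℕ) : R)) * (((i : ℕ) : R) - 1)) •
        (p (i + j) * d (i - 1) (d j f))) (by intro j; simp)).trans (finsum2_congr ?_)
    intro i j
    show (((((i + 1 : ℕ+) : ℕ) : R) * ((j : ℕ) : R)) * ((((i + 1 : ℕ+) : ℕ) : R) - 1)) •
        (p (i + 1 + j) * d (i + 1 - 1) (d j f)) = _
    rw [pnat_add_sub, pnat_coe_succ]
    have hidx : i + 1 + j = i + j + 1 := by rw [add_right_comm]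
    rw [hidx]
    congr 1
    ring
  -- cast the third sum
  have hcastW : (∑ᶠ i : ℕ+, ∑ᶠ j : ℕ+, ((((i : ℕ) : R) * ((j : ℕ) : R)) * (((i + j : ℕ+) : ℕ) : R)) •
        (p (i + j + 1) * d i (d j f)))
      = ∑ᶠ i : ℕ+, ∑ᶠ j : ℕ+, ((((i : ℕ) : R) * ((j : ℕ) : R)) * (((i : ℕ) : R) + ((j : ℕ) : R))) •
        (p (i + j + 1) * d i (d j f)) := by
    apply finsum2_congr
    intro i j
    rw [pnat_coe_add]
  rw [hshY, hshZ, hcastW]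
  have hadd : (∑ᶠ i : ℕ+, ∑ᶠ j : ℕ+, ((((i : ℕ) : R) * (((j : ℕ) : R) + 1)) * ((j : ℕ) : R)) •
        (p (i + j + 1) * d i (d j f)))
      + (∑ᶠ i : ℕ+, ∑ᶠ j : ℕ+, (((((i : ℕ) : R) + 1) * ((j : ℕ) : R)) * ((i : ℕ) : R)) •
        (p (i + j + 1) * d i (d j f)))
      = ∑ᶠ i : ℕ+, ∑ᶠ j : ℕ+,
          (((((i : ℕ) : R) * (((j : ℕ) : R) + 1)) * ((j : ℕ) : R)) •
            (p (i + j + 1) * d i (d j f))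
          + ((((((i : ℕ) : R) + 1) * ((j : ℕ) : R)) * ((i : ℕ) : R)) •
            (p (i + j + 1) * d i (d j f)))) := finsum2_add _ _ hY hZ
  have hsub : (∑ᶠ i : ℕ+, ∑ᶠ j : ℕ+,
          (((((i : ℕ) : R) * (((j : ℕ) : R) + 1)) * ((j : ℕ) : R)) •
            (p (i + j + 1) * d i (d j f))
          + ((((((i : ℕ) : R) + 1) * ((j : ℕ) : R)) * ((i : ℕ) : R)) •
            (p (i + j + 1) * d i (d j f)))))
      - (∑ᶠ i : ℕ+, ∑ᶠ j : ℕ+, ((((i : ℕ) : R) * ((j : ℕ) : R)) * (((i : ℕ) : R) + ((j : ℕ) : R))) •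
            (p (i + j + 1) * d i (d j f)))
      = ∑ᶠ i : ℕ+, ∑ᶠ j : ℕ+,
          ((((((i : ℕ) : R) * (((j : ℕ) : R) + 1)) * ((j : ℕ) : R)) •
            (p (i + j + 1) * d i (d j f))
          + ((((((i : ℕ) : R) + 1) * ((j : ℕ) : R)) * ((i : ℕ) : R)) •
            (p (i + j + 1) * d i (d j f))))
          - ((((i : ℕ) : R) * ((j : ℕ) : R)) * (((i : ℕ) : R) + ((j : ℕ) : R))) •
            (p (i + j + 1) * d i (d j f))) := finsum2_sub _ _ (supp_pair_add hY hZ) hW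
  have hcomb : (∑ᶠ i : ℕ+, ∑ᶠ j : ℕ+,
          ((((((i : ℕ) : R) * (((j : ℕ) : R) + 1)) * ((j : ℕ) : R)) •
            (p (i + j + 1) * d i (d j f))
          + ((((((i : ℕ) : R) + 1) * ((j : ℕ) : R)) * ((i : ℕ) : R)) •
            (p (i + j + 1) * d i (d j f))))
          - ((((i : ℕ) : R) * ((j : ℕ) : R)) * (((i : ℕ) : R) + ((j : ℕ) : R))) •
            (p (i + j + 1) * d i (d j f))))
      = ∑ᶠ i : ℕ+, ∑ᶠ j : ℕ+, (2 * (((i : ℕ) : R) * ((j : ℕ) : R))) •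
          (p (i + j + 1) * d i (d j f)) := by
    apply finsum2_congr
    intro i j
    rw [← add_smul, ← sub_smul]
    congr 1
    ring
  rw [hadd, hsub, hcomb, smul_finsum2 _ _ hV, smul_finsum2 _ _ hT]
  apply finsum2_congr
  intro i j
  rw [smul_smul, smul_smul]
  congr 1
  have h : Polynomial.C (1/2 : ℚ) * α * (2 * (((i : ℕ) : R) * ((j : ℕ) : R)))
      = (Polynomial.C (1/2 : ℚ) * 2) * (α * (((i : ℕ) : R) * ((j : ℕ) : R))) := by ring
  rw [h, half2, one_mul]

lemma P3Δ (f : A) :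
    Polynomial.C (1/2 : ℚ) •
      ((∑ᶠ i : ℕ+, ∑ᶠ j : ℕ+, (((((i : ℕ) : R) + ((j : ℕ) : R)) * ((((i + j : ℕ+) : ℕ) : R) - 1)) •
            (p i * p j * d (i + j - 1) f)))
        - (∑ᶠ i : ℕ+, ∑ᶠ j : ℕ+, (((((i : ℕ) : R) + ((j : ℕ) : R)) * ((i : ℕ) : R)) •
            (p (i + 1) * p j * d (i + j) f)))
        - ∑ᶠ i : ℕ+, ∑ᶠ j : ℕ+, (((((i : ℕ) : R) + ((j : ℕ) : R)) * ((j : ℕ) : R)) •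
            (p i * p (j + 1) * d (i + j) f)))
    = ∑ᶠ i : ℕ+, ∑ᶠ j : ℕ+, ((((i : ℕ) : R) + ((j : ℕ) : R)) - 1) •
        (p i * p j * d (i + j - 1) f) := by
  have hX : (support fun q : ℕ+ × ℕ+ =>
      (((((q.1 : ℕ) : R) + ((q.2 : ℕ) : R)) * ((((q.1 : ℕ) : R) + ((q.2 : ℕ) : R)) - 1)) •
        (p q.1 * p q.2 * d (q.1 + q.2 - 1) f))).Finite :=
    suppM3' f _ (fun q => p q.1 * p q.2) (fun q => q.1 + q.2 - 1)
      (fun y => fiber_pair_sum_sub 1 y)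
  have hY : (support fun q : ℕ+ × ℕ+ =>
      ((((((q.1 : ℕ) : R) + ((q.2 : ℕ) : R)) - 1) * (((q.1 : ℕ) : R) - 1)) •
        (p q.1 * p q.2 * d (q.1 + q.2 - 1) f))).Finite :=
    suppM3' f _ (fun q => p q.1 * p q.2) (fun q => q.1 + q.2 - 1)
      (fun y => fiber_pair_sum_sub 1 y)
  have hZ : (support fun q : ℕ+ × ℕ+ =>
      ((((((q.1 : ℕ) : R) + ((q.2 : ℕ) : R)) - 1) * (((q.2 : ℕ) : R) - 1)) •
        (p q.1 * p q.2 * d (q.1 + q.2 - 1) f))).Finite :=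
    suppM3' f _ (fun q => p q.1 * p q.2) (fun q => q.1 + q.2 - 1)
      (fun y => fiber_pair_sum_sub 1 y)
  have hV : (support fun q : ℕ+ × ℕ+ =>
      ((2 * ((((q.1 : ℕ) : R) + ((q.2 : ℕ) : R)) - 1)) •
        (p q.1 * p q.2 * d (q.1 + q.2 - 1) f))).Finite :=
    suppM3' f _ (fun q => p q.1 * p q.2) (fun q => q.1 + q.2 - 1)
      (fun y => fiber_pair_sum_sub 1 y)
  have hT : (support fun q : ℕ+ × ℕ+ =>
      (((((q.1 : ℕ) : R) + ((q.2 : ℕ) : R)) - 1) •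
        (p q.1 * p q.2 * d (q.1 + q.2 - 1) f))).Finite :=
    suppM3' f _ (fun q => p q.1 * p q.2) (fun q => q.1 + q.2 - 1)
      (fun y => fiber_pair_sum_sub 1 y)
  have hidx : ∀ i j : ℕ+, i + 1 + j - 1 = i + j := by
    intro i j
    rw [add_right_comm, pnat_add_sub]
  have hidx2 : ∀ i j : ℕ+, i + (j + 1) - 1 = i + j := by
    intro i j
    rw [← add_assoc, pnat_add_sub]
  have hcastX : (∑ᶠ i : ℕ+, ∑ᶠ j : ℕ+, (((((i : ℕ) : R) + ((j : ℕ) : R)) * ((((i + j : ℕ+) : ℕ) : R) - 1)) •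
        (p i * p j * d (i + j - 1) f)))
      = ∑ᶠ i : ℕ+, ∑ᶠ j : ℕ+, (((((i : ℕ) : R) + ((j : ℕ) : R)) * ((((i : ℕ) : R) + ((j : ℕ) : R)) - 1)) •
        (p i * p j * d (i + j - 1) f)) := by
    apply finsum2_congr
    intro i j
    rw [pnat_coe_add]
  have hshY : (∑ᶠ i : ℕ+, ∑ᶠ j : ℕ+, ((((((i : ℕ) : R) + ((j : ℕ) : R)) - 1) * (((i : ℕ) : R) - 1)) •
        (p i * p j * d (i + j - 1) f)))
      = ∑ᶠ i : ℕ+, ∑ᶠ j : ℕ+, (((((i : ℕ) : R) + ((j : ℕ) : R)) * ((i : ℕ) : R)) •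
        (p (i + 1) * p j * d (i + j) f)) := by
    refine (finsum2_shift_outer
      (fun i j => ((((((i : ℕ) : R) + ((j : ℕ) : R)) - 1) * (((i : ℕ) : R) - 1)) •
        (p i * p j * d (i + j - 1) f))) (by intro j; simp)).trans (finsum2_congr ?_)
    intro i j
    show (((((i + 1 : ℕ+) : ℕ) : R) + ((j : ℕ) : R) - 1) * ((((i + 1 : ℕ+) : ℕ) : R) - 1)) •
        (p (i + 1) * p j * d (i + 1 + j - 1) f) = _
    rw [hidx, pnat_coe_succ]
    congr 1
    ring
  have hshZ : (∑ᶠ i : ℕ+, ∑ᶠ j : ℕ+, ((((((i : ℕ) : R) + ((j : ℕ) : R)) - 1) * (((j : ℕ) : R) - 1)) •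
        (p i * p j * d (i + j - 1) f)))
      = ∑ᶠ i : ℕ+, ∑ᶠ j : ℕ+, (((((i : ℕ) : R) + ((j : ℕ) : R)) * ((j : ℕ) : R)) •
        (p i * p (j + 1) * d (i + j) f)) := by
    refine (finsum2_shift_inner
      (fun i j => ((((((i : ℕ) : R) + ((j : ℕ) : R)) - 1) * (((j : ℕ) : R) - 1)) •
        (p i * p j * d (i + j - 1) f))) (by intro i; simp)).trans (finsum2_congr ?_)
    intro i j
    show ((((i : ℕ) : R) + (((j + 1 : ℕ+) : ℕ) : R) - 1) * ((((j + 1 : ℕ+) : ℕ) : R) - 1)) •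
        (p i * p (j + 1) * d (i + (j + 1) - 1) f) = _
    rw [hidx2, pnat_coe_succ]
    congr 1
    ring
  rw [hcastX, ← hshY, ← hshZ]
  have e1 : (∑ᶠ i : ℕ+, ∑ᶠ j : ℕ+, (((((i : ℕ) : R) + ((j : ℕ) : R)) * ((((i : ℕ) : R) + ((j : ℕ) : R)) - 1)) •
        (p i * p j * d (i + j - 1) f)))
      - (∑ᶠ i : ℕ+, ∑ᶠ j : ℕ+, ((((((i : ℕ) : R) + ((j : ℕ) : R)) - 1) * (((i : ℕ) : R) - 1)) •
        (p i * p j * d (i + j - 1) f)))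
      = ∑ᶠ i : ℕ+, ∑ᶠ j : ℕ+,
          ((((((i : ℕ) : R) + ((j : ℕ) : R)) * ((((i : ℕ) : R) + ((j : ℕ) : R)) - 1)) •
            (p i * p j * d (i + j - 1) f))
          - (((((i : ℕ) : R) + ((j : ℕ) : R)) - 1) * (((i : ℕ) : R) - 1)) •
            (p i * p j * d (i + j - 1) f)) := by
    have hXc : (support fun q : ℕ+ × ℕ+ =>
        (((((q.1 : ℕ) : R) + ((q.2 : ℕ) : R)) * ((((q.1 : ℕ) : R) + ((q.2 : ℕ) : R)) - 1)) •
          (p q.1 * p q.2 * d (q.1 + q.2 - 1) f))).Finite :=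
      suppM3' f _ (fun q => p q.1 * p q.2) (fun q => q.1 + q.2 - 1)
        (fun y => fiber_pair_sum_sub 1 y)
    exact finsum2_sub _ _ hXc hY
  rw [e1]
  have hXc : (support fun q : ℕ+ × ℕ+ =>
      ((((((q.1 : ℕ) : R) + ((q.2 : ℕ) : R)) * ((((q.1 : ℕ) : R) + ((q.2 : ℕ) : R)) - 1)) •
          (p q.1 * p q.2 * d (q.1 + q.2 - 1) f))
        - (((((q.1 : ℕ) : R) + ((q.2 : ℕ) : R)) - 1) * (((q.1 : ℕ) : R) - 1)) •
          (p q.1 * p q.2 * d (q.1 + q.2 - 1) f))).Finite := by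
    refine supp_pair_sub ?_ hY
    exact suppM3' f _ (fun q => p q.1 * p q.2) (fun q => q.1 + q.2 - 1)
      (fun y => fiber_pair_sum_sub 1 y)
  have e2 : (∑ᶠ i : ℕ+, ∑ᶠ j : ℕ+,
        ((((((i : ℕ) : R) + ((j : ℕ) : R)) * ((((i : ℕ) : R) + ((j : ℕ) : R)) - 1)) •
          (p i * p j * d (i + j - 1) f))
        - (((((i : ℕ) : R) + ((j : ℕ) : R)) - 1) * (((i : ℕ) : R) - 1)) •
          (p i * p j * d (i + j - 1) f)))
      - (∑ᶠ i : ℕ+, ∑ᶠ j : ℕ+, ((((((i : ℕ) : R) + ((j : ℕ) : R)) - 1) * (((j : ℕ) : R) - 1)) •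
          (p i * p j * d (i + j - 1) f)))
      = ∑ᶠ i : ℕ+, ∑ᶠ j : ℕ+,
          (((((((i : ℕ) : R) + ((j : ℕ) : R)) * ((((i : ℕ) : R) + ((j : ℕ) : R)) - 1)) •
            (p i * p j * d (i + j - 1) f))
          - (((((i : ℕ) : R) + ((j : ℕ) : R)) - 1) * (((i : ℕ) : R) - 1)) •
            (p i * p j * d (i + j - 1) f))
          - (((((i : ℕ) : R) + ((j : ℕ) : R)) - 1) * (((j : ℕ) : R) - 1)) •
            (p i * p j * d (i + j - 1) f)) := finsum2_sub _ _ hXc hZ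
  rw [e2]
  have hcomb : (∑ᶠ i : ℕ+, ∑ᶠ j : ℕ+,
        (((((((i : ℕ) : R) + ((j : ℕ) : R)) * ((((i : ℕ) : R) + ((j : ℕ) : R)) - 1)) •
          (p i * p j * d (i + j - 1) f))
        - (((((i : ℕ) : R) + ((j : ℕ) : R)) - 1) * (((i : ℕ) : R) - 1)) •
          (p i * p j * d (i + j - 1) f))
        - (((((i : ℕ) : R) + ((j : ℕ) : R)) - 1) * (((j : ℕ) : R) - 1)) •
          (p i * p j * d (i + j - 1) f)))
      = ∑ᶠ i : ℕ+, ∑ᶠ j : ℕ+, (2 * ((((i : ℕ) : R) + ((j : ℕ) : R)) - 1)) •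
          (p i * p j * d (i + j - 1) f) := by
    apply finsum2_congr
    intro i j
    rw [← sub_smul, ← sub_smul]
    congr 1
    ring
  rw [hcomb, smul_finsum2 _ _ hV]
  apply finsum2_congr
  intro i j
  rw [smul_smul]
  have h : Polynomial.C (1/2 : ℚ) * (2 * ((((i : ℕ) : R) + ((j : ℕ) : R)) - 1))
      = (Polynomial.C (1/2 : ℚ) * 2) * ((((i : ℕ) : R) + ((j : ℕ) : R)) - 1) := by ring
  rw [h, half2, one_mul]

-- §8 Δ explicit
def Δe (f : A) : A :=
    (α - 1) • (∑ᶠ i : ℕ+, (((i : ℕ) : R) * ((i : ℕ) : R)) • (p (i + 1) * d i f))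
  + α • (∑ᶠ i : ℕ+, ∑ᶠ j : ℕ+, (((i : ℕ) : R) * ((j : ℕ) : R)) • (p (i + j + 1) * d i (d j f)))
  + ∑ᶠ i : ℕ+, ∑ᶠ j : ℕ+, ((((i : ℕ) : R) + ((j : ℕ) : R)) - 1) • (p i * p j * d (i + j - 1) f)

lemma key3 (w1 w2 w3 : R) (X1 X2 X3 Y1 Y2 Y3 : A) :
    (w1 • X1 + w2 • X2 + w3 • X3) - (w1 • Y1 + w2 • Y2 + w3 • Y3)
      = w1 • (X1 - Y1) + w2 • (X2 - Y2) + w3 • (X3 - Y3) := by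
  rw [smul_sub, smul_sub, smul_sub]
  abel

lemma Δ_eq (f : A) : Δop f = Δe f := by
  have hC1 : (∑ᶠ i : ℕ+, (((i : ℕ) : R) * (((i : ℕ) : R) - 1)) • (p i * d i (E₂ f)))
      - E₂ (∑ᶠ i : ℕ+, (((i : ℕ) : R) * (((i : ℕ) : R) - 1)) • (p i * d i f))
      = (∑ᶠ i : ℕ+, (((i : ℕ) : R) * (((i : ℕ) : R) - 1) * (((i : ℕ) : R) - 1)) • (p i * d (i - 1) f))
        - ∑ᶠ i : ℕ+, (((i : ℕ) : R) * (((i : ℕ) : R) - 1) * ((i : ℕ) : R)) • (p (i + 1) * d i f) :=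
    C1 (fun i => ((i : ℕ) : R) * (((i : ℕ) : R) - 1)) (fun i => i) f
  have hC2 : (∑ᶠ i : ℕ+, ∑ᶠ j : ℕ+, (((i : ℕ) : R) * ((j : ℕ) : R)) • (p (i + j) * d i (d j (E₂ f))))
      - E₂ (∑ᶠ i : ℕ+, ∑ᶠ j : ℕ+, (((i : ℕ) : R) * ((j : ℕ) : R)) • (p (i + j) * d i (d j f)))
      = (∑ᶠ i : ℕ+, ∑ᶠ j : ℕ+, ((((i : ℕ) : R) * ((j : ℕ) : R)) * (((j : ℕ) : R) - 1)) •
            (p (i + j) * d i (d (j - 1) f))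
          + ∑ᶠ i : ℕ+, ∑ᶠ j : ℕ+, ((((i : ℕ) : R) * ((j : ℕ) : R)) * (((i : ℕ) : R) - 1)) •
            (p (i + j) * d (i - 1) (d j f)))
        - ∑ᶠ i : ℕ+, ∑ᶠ j : ℕ+, ((((i : ℕ) : R) * ((j : ℕ) : R)) * (((i + j : ℕ+) : ℕ) : R)) •
            (p (i + j + 1) * d i (d j f)) :=
    C2 (fun i j => ((i : ℕ) : R) * ((j : ℕ) : R)) (fun i j => i + j) f
  have hC3 : (∑ᶠ i : ℕ+, ∑ᶠ j : ℕ+, (((i : ℕ) : R) + ((j : ℕ) : R)) • (p i * p j * d (i + j) (E₂ f)))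
      - E₂ (∑ᶠ i : ℕ+, ∑ᶠ j : ℕ+, (((i : ℕ) : R) + ((j : ℕ) : R)) • (p i * p j * d (i + j) f))
      = (∑ᶠ i : ℕ+, ∑ᶠ j : ℕ+, (((((i : ℕ) : R) + ((j : ℕ) : R)) * ((((i + j : ℕ+) : ℕ) : R) - 1)) •
            (p i * p j * d (i + j - 1) f)))
        - (∑ᶠ i : ℕ+, ∑ᶠ j : ℕ+, (((((i : ℕ) : R) + ((j : ℕ) : R)) * ((i : ℕ) : R)) •
            (p (i + 1) * p j * d (i + j) f)))
        - ∑ᶠ i : ℕ+, ∑ᶠ j : ℕ+, (((((i : ℕ) : R) + ((j : ℕ) : R)) * ((j : ℕ) : R)) •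
            (p i * p (j + 1) * d (i + j) f)) :=
    C3 (fun i j => ((i : ℕ) : R) + ((j : ℕ) : R)) (fun i j => i + j)
      (fun y => fiber_pair_sum y) f
  unfold Δop Dal Δe
  rw [E₂_add, E₂_add, E₂_smul, E₂_smul, E₂_smul, key3, hC1, hC2, hC3, P1Δ f, P2Δ f, P3Δ f]

-- §9 Ω step
lemma pidx {x y : ℕ+} (h : (x : ℕ) = (y : ℕ)) : x = y := PNat.coe_injective h

lemma pnat_i21 (i : ℕ+) : i + 1 + 1 - 2 = i := by
  have h := i.pos
  apply pidx
  rw [pnat_coe_sub']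
  push_cast
  omega

lemma pnat_cast_i2 (i : ℕ+) : (((i + 1 + 1 : ℕ+) : ℕ) : R) = ((i : ℕ) : R) + 2 := by
  push_cast
  ring

lemma P1Ω (f : A) :
    (∑ᶠ i : ℕ+, ((((i : ℕ) : R) * ((i : ℕ) : R)) * (((i : ℕ) : R) - 1)) • (p (i + 1) * d (i - 1) f))
      - (∑ᶠ i : ℕ+, ((((i : ℕ) : R) * ((i : ℕ) : R)) * (((i + 1 : ℕ+) : ℕ) : R)) • (p (i + 1 + 1) * d i f))
    = ∑ᶠ i : ℕ+, ((((i : ℕ) : R) - 1) * (((i : ℕ) : R) - 2)) • (p i * d (i - 2) f) := by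
  have hsh : (∑ᶠ i : ℕ+, ((((i : ℕ) : R) * ((i : ℕ) : R)) * (((i : ℕ) : R) - 1)) • (p (i + 1) * d (i - 1) f))
      = ∑ᶠ i : ℕ+, (((((i : ℕ) : R) + 1) * (((i : ℕ) : R) + 1)) * ((i : ℕ) : R)) • (p (i + 1 + 1) * d i f) := by
    refine (finsum_pnat_shift
      (fun i : ℕ+ => ((((i : ℕ) : R) * ((i : ℕ) : R)) * (((i : ℕ) : R) - 1)) • (p (i + 1) * d (i - 1) f))
      (by simp)).trans (finsum_congr ?_)
    intro i
    show (((((i + 1 : ℕ+) : ℕ) : R) * (((i + 1 : ℕ+) : ℕ) : R)) * ((((i + 1 : ℕ+) : ℕ) : R) - 1)) •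
        (p (i + 1 + 1) * d (i + 1 - 1) f) = _
    rw [pnat_add_sub, pnat_coe_succ]
    congr 1
    ring
  have hshT : (∑ᶠ i : ℕ+, ((((i : ℕ) : R) - 1) * (((i : ℕ) : R) - 2)) • (p i * d (i - 2) f))
      = ∑ᶠ i : ℕ+, (((((i : ℕ) : R) + 1) * ((i : ℕ) : R)) • (p (i + 1 + 1) * d i f)) := by
    refine (finsum_pnat_shift
      (fun i : ℕ+ => ((((i : ℕ) : R) - 1) * (((i : ℕ) : R) - 2)) • (p i * d (i - 2) f))
      (by simp)).trans ?_
    refine (finsum_pnat_shift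
      (fun i : ℕ+ => (((((i + 1 : ℕ+) : ℕ) : R) - 1) * ((((i + 1 : ℕ+) : ℕ) : R) - 2)) • (p (i + 1) * d (i + 1 - 2) f))
      ?_).trans (finsum_congr ?_)
    · show (((((1 + 1 : ℕ+) : ℕ) : R) - 1) * ((((1 + 1 : ℕ+) : ℕ) : R) - 2)) • (p (1 + 1) * d (1 + 1 - 2) f) = 0
      have h2 : (((1 + 1 : ℕ+) : ℕ) : R) = 2 := by push_cast; norm_num
      rw [h2]
      norm_num
    · intro i
      show (((((i + 1 + 1 : ℕ+) : ℕ) : R) - 1) * ((((i + 1 + 1 : ℕ+) : ℕ) : R) - 2)) • (p (i + 1 + 1) * d (i + 1 + 1 - 2) f) = _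
      rw [pnat_i21, pnat_cast_i2]
      congr 1
      ring
  rw [hsh, hshT]
  have hs1 : (support fun i : ℕ+ =>
      ((((((i : ℕ) : R) + 1) * (((i : ℕ) : R) + 1)) * ((i : ℕ) : R)) • (p (i + 1 + 1) * d i f))).Finite :=
    suppM f _ (fun i => i + 1 + 1) id (fun y => fiber_id y)
  have hs2 : (support fun i : ℕ+ =>
      (((((i : ℕ) : R) * ((i : ℕ) : R)) * (((i + 1 : ℕ+) : ℕ) : R)) • (p (i + 1 + 1) * d i f))).Finite :=
    suppM f _ (fun i => i + 1 + 1) id (fun y => fiber_id y)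
  rw [← finsum_sub_distrib hs1 hs2]
  apply finsum_congr
  intro i
  rw [← sub_smul, pnat_coe_succ]
  congr 1
  ring

lemma pnat_ij2a (i j : ℕ+) : i + (j + 1) + 1 = i + j + 2 := by
  apply pidx; push_cast; omega

lemma pnat_ij2b (i j : ℕ+) : i + 1 + j + 1 = i + j + 2 := by
  apply pidx; push_cast; omega

lemma pnat_ij2c (i j : ℕ+) : i + j + 1 + 1 = i + j + 2 := by
  apply pidx; push_cast; omega

lemma pnat_cast_ij1 (i j : ℕ+) :
    (((i + j + 1 : ℕ+) : ℕ) : R) = ((i : ℕ) : R) + ((j : ℕ) : R) + 1 := by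
  push_cast; ring

lemma P2Ω (f : A) :
    ((∑ᶠ i : ℕ+, ∑ᶠ j : ℕ+, ((((i : ℕ) : R) * ((j : ℕ) : R)) * (((j : ℕ) : R) - 1)) •
        (p (i + j + 1) * d i (d (j - 1) f)))
      + ∑ᶠ i : ℕ+, ∑ᶠ j : ℕ+, ((((i : ℕ) : R) * ((j : ℕ) : R)) * (((i : ℕ) : R) - 1)) •
        (p (i + j + 1) * d (i - 1) (d j f)))
      - ∑ᶠ i : ℕ+, ∑ᶠ j : ℕ+, ((((i : ℕ) : R) * ((j : ℕ) : R)) * (((i + j + 1 : ℕ+) : ℕ) : R)) •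
        (p (i + j + 1 + 1) * d i (d j f))
    = ∑ᶠ i : ℕ+, ∑ᶠ j : ℕ+, (((i : ℕ) : R) * ((j : ℕ) : R)) • (p (i + j + 2) * d i (d j f)) := by
  have hY : (support fun q : ℕ+ × ℕ+ =>
      ((((q.1 : ℕ) : R) * (((q.2 : ℕ) : R) + 1)) * ((q.2 : ℕ) : R)) •
        (p (q.1 + q.2 + 2) * d q.1 (d q.2 f))).Finite :=
    suppM2' f _ (fun q => q.1 + q.2 + 2) id id (fun y => fiber_id y) (fun y => fiber_id y)
  have hZ : (support fun q : ℕ+ × ℕ+ =>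
      (((((q.1 : ℕ) : R) + 1) * ((q.2 : ℕ) : R)) * ((q.1 : ℕ) : R)) •
        (p (q.1 + q.2 + 2) * d q.1 (d q.2 f))).Finite :=
    suppM2' f _ (fun q => q.1 + q.2 + 2) id id (fun y => fiber_id y) (fun y => fiber_id y)
  have hW : (support fun q : ℕ+ × ℕ+ =>
      ((((q.1 : ℕ) : R) * ((q.2 : ℕ) : R)) * (((q.1 : ℕ) : R) + ((q.2 : ℕ) : R) + 1)) •
        (p (q.1 + q.2 + 2) * d q.1 (d q.2 f))).Finite :=
    suppM2' f _ (fun q => q.1 + q.2 + 2) id id (fun y => fiber_id y) (fun y => fiber_id y)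
  have hshY : (∑ᶠ i : ℕ+, ∑ᶠ j : ℕ+, ((((i : ℕ) : R) * ((j : ℕ) : R)) * (((j : ℕ) : R) - 1)) •
        (p (i + j + 1) * d i (d (j - 1) f)))
      = ∑ᶠ i : ℕ+, ∑ᶠ j : ℕ+, ((((i : ℕ) : R) * (((j : ℕ) : R) + 1)) * ((j : ℕ) : R)) •
        (p (i + j + 2) * d i (d j f)) := by
    refine (finsum2_shift_inner
      (fun i j => ((((i : ℕ) : R) * ((j : ℕ) : R)) * (((j : ℕ) : R) - 1)) •
        (p (i + j + 1) * d i (d (j - 1) f))) (by intro i; simp)).trans (finsum2_congr ?_)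
    intro i j
    show ((((i : ℕ) : R) * (((j + 1 : ℕ+) : ℕ) : R)) * ((((j + 1 : ℕ+) : ℕ) : R) - 1)) •
        (p (i + (j + 1) + 1) * d i (d (j + 1 - 1) f)) = _
    rw [pnat_add_sub, pnat_ij2a, pnat_coe_succ]
    congr 1
    ring
  have hshZ : (∑ᶠ i : ℕ+, ∑ᶠ j : ℕ+, ((((i : ℕ) : R) * ((j : ℕ) : R)) * (((i : ℕ) : R) - 1)) •
        (p (i + j + 1) * d (i - 1) (d j f)))
      = ∑ᶠ i : ℕ+, ∑ᶠ j : ℕ+, (((((i : ℕ) : R) + 1) * ((j : ℕ) : R)) * ((i : ℕ) : R)) •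
        (p (i + j + 2) * d i (d j f)) := by
    refine (finsum2_shift_outer
      (fun i j => ((((i : ℕ) : R) * ((j : ℕ) : R)) * (((i : ℕ) : R) - 1)) •
        (p (i + j + 1) * d (i - 1) (d j f))) (by intro j; simp)).trans (finsum2_congr ?_)
    intro i j
    show (((((i + 1 : ℕ+) : ℕ) : R) * ((j : ℕ) : R)) * ((((i + 1 : ℕ+) : ℕ) : R) - 1)) •
        (p (i + 1 + j + 1) * d (i + 1 - 1) (d j f)) = _
    rw [pnat_add_sub, pnat_ij2b, pnat_coe_succ]
    congr 1
    ring
  have hcastW : (∑ᶠ i : ℕ+, ∑ᶠ j : ℕ+, ((((i : ℕ) : R) * ((j : ℕ) : R)) * (((i + j + 1 : ℕ+) : ℕ) : R)) •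
        (p (i + j + 1 + 1) * d i (d j f)))
      = ∑ᶠ i : ℕ+, ∑ᶠ j : ℕ+, ((((i : ℕ) : R) * ((j : ℕ) : R)) * (((i : ℕ) : R) + ((j : ℕ) : R) + 1)) •
        (p (i + j + 2) * d i (d j f)) := by
    apply finsum2_congr
    intro i j
    rw [pnat_ij2c, pnat_cast_ij1]
  rw [hshY, hshZ, hcastW]
  have hadd : (∑ᶠ i : ℕ+, ∑ᶠ j : ℕ+, ((((i : ℕ) : R) * (((j : ℕ) : R) + 1)) * ((j : ℕ) : R)) •
        (p (i + j + 2) * d i (d j f)))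
      + (∑ᶠ i : ℕ+, ∑ᶠ j : ℕ+, (((((i : ℕ) : R) + 1) * ((j : ℕ) : R)) * ((i : ℕ) : R)) •
        (p (i + j + 2) * d i (d j f)))
      = ∑ᶠ i : ℕ+, ∑ᶠ j : ℕ+,
          (((((i : ℕ) : R) * (((j : ℕ) : R) + 1)) * ((j : ℕ) : R)) • (p (i + j + 2) * d i (d j f))
            + ((((((i : ℕ) : R) + 1) * ((j : ℕ) : R)) * ((i : ℕ) : R)) •
              (p (i + j + 2) * d i (d j f)))) := finsum2_add _ _ hY hZ
  rw [hadd]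
  have hsub : (∑ᶠ i : ℕ+, ∑ᶠ j : ℕ+,
          (((((i : ℕ) : R) * (((j : ℕ) : R) + 1)) * ((j : ℕ) : R)) • (p (i + j + 2) * d i (d j f))
            + ((((((i : ℕ) : R) + 1) * ((j : ℕ) : R)) * ((i : ℕ) : R)) •
              (p (i + j + 2) * d i (d j f)))))
      - (∑ᶠ i : ℕ+, ∑ᶠ j : ℕ+, ((((i : ℕ) : R) * ((j : ℕ) : R)) * (((i : ℕ) : R) + ((j : ℕ) : R) + 1)) •
          (p (i + j + 2) * d i (d j f)))
      = ∑ᶠ i : ℕ+, ∑ᶠ j : ℕ+,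
          ((((((i : ℕ) : R) * (((j : ℕ) : R) + 1)) * ((j : ℕ) : R)) • (p (i + j + 2) * d i (d j f))
            + ((((((i : ℕ) : R) + 1) * ((j : ℕ) : R)) * ((i : ℕ) : R)) •
              (p (i + j + 2) * d i (d j f))))
          - ((((i : ℕ) : R) * ((j : ℕ) : R)) * (((i : ℕ) : R) + ((j : ℕ) : R) + 1)) •
              (p (i + j + 2) * d i (d j f))) := finsum2_sub _ _ (supp_pair_add hY hZ) hW
  rw [hsub]
  apply finsum2_congr
  intro i j
  rw [← add_smul, ← sub_smul]
  congr 1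
  ring

lemma pnat_sub11 (i j : ℕ+) : i + j - 1 - 1 = i + j - 2 := by
  have h1 := i.pos; have h2 := j.pos
  apply pidx
  rw [pnat_coe_sub', pnat_coe_sub', pnat_coe_sub']
  push_cast
  omega

lemma pnat_i1j2 (i j : ℕ+) : i + 1 + j - 2 = i + j - 1 := by
  have h1 := i.pos; have h2 := j.pos
  apply pidx
  rw [pnat_coe_sub', pnat_coe_sub']
  push_cast
  omega

lemma pnat_ij12 (i j : ℕ+) : i + (j + 1) - 2 = i + j - 1 := by
  have h1 := i.pos; have h2 := j.pos
  apply pidx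
  rw [pnat_coe_sub', pnat_coe_sub']
  push_cast
  omega

lemma pnat_cast_ijm1 (i j : ℕ+) :
    (((i + j - 1 : ℕ+) : ℕ) : R) = ((i : ℕ) : R) + ((j : ℕ) : R) - 1 := by
  have h1 := i.pos; have h2 := j.pos
  have hn : ((i + j - 1 : ℕ+) : ℕ) = (i : ℕ) + (j : ℕ) - 1 := by
    rw [pnat_coe_sub']; push_cast; omega
  rw [hn, Nat.cast_sub (by omega)]
  push_cast
  ring

lemma P3Ω (f : A) :
    ((∑ᶠ i : ℕ+, ∑ᶠ j : ℕ+, (((((i : ℕ) : R) + ((j : ℕ) : R)) - 1) * ((((i + j - 1 : ℕ+) : ℕ) : R) - 1)) •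
        (p i * p j * d (i + j - 1 - 1) f))
      - ∑ᶠ i : ℕ+, ∑ᶠ j : ℕ+, (((((i : ℕ) : R) + ((j : ℕ) : R)) - 1) * ((i : ℕ) : R)) •
        (p (i + 1) * p j * d (i + j - 1) f))
      - ∑ᶠ i : ℕ+, ∑ᶠ j : ℕ+, (((((i : ℕ) : R) + ((j : ℕ) : R)) - 1) * ((j : ℕ) : R)) •
        (p i * p (j + 1) * d (i + j - 1) f)
    = ∑ᶠ i : ℕ+, ∑ᶠ j : ℕ+, ((((i : ℕ) : R) + ((j : ℕ) : R)) - 2) •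
        (p i * p j * d (i + j - 2) f) := by
  have hX : (support fun q : ℕ+ × ℕ+ =>
      ((((((q.1 : ℕ) : R) + ((q.2 : ℕ) : R)) - 1) * ((((q.1 : ℕ) : R) + ((q.2 : ℕ) : R)) - 2)) •
        (p q.1 * p q.2 * d (q.1 + q.2 - 2) f))).Finite :=
    suppM3' f _ (fun q => p q.1 * p q.2) (fun q => q.1 + q.2 - 2)
      (fun y => fiber_pair_sum_sub 2 y)
  have hY : (support fun q : ℕ+ × ℕ+ =>
      ((((((q.1 : ℕ) : R) + ((q.2 : ℕ) : R)) - 2) * (((q.1 : ℕ) : R) - 1)) •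
        (p q.1 * p q.2 * d (q.1 + q.2 - 2) f))).Finite :=
    suppM3' f _ (fun q => p q.1 * p q.2) (fun q => q.1 + q.2 - 2)
      (fun y => fiber_pair_sum_sub 2 y)
  have hZ : (support fun q : ℕ+ × ℕ+ =>
      ((((((q.1 : ℕ) : R) + ((q.2 : ℕ) : R)) - 2) * (((q.2 : ℕ) : R) - 1)) •
        (p q.1 * p q.2 * d (q.1 + q.2 - 2) f))).Finite :=
    suppM3' f _ (fun q => p q.1 * p q.2) (fun q => q.1 + q.2 - 2)
      (fun y => fiber_pair_sum_sub 2 y)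
  have hcastX : (∑ᶠ i : ℕ+, ∑ᶠ j : ℕ+, (((((i : ℕ) : R) + ((j : ℕ) : R)) - 1) * ((((i + j - 1 : ℕ+) : ℕ) : R) - 1)) •
        (p i * p j * d (i + j - 1 - 1) f))
      = ∑ᶠ i : ℕ+, ∑ᶠ j : ℕ+, (((((i : ℕ) : R) + ((j : ℕ) : R)) - 1) * ((((i : ℕ) : R) + ((j : ℕ) : R)) - 2)) •
        (p i * p j * d (i + j - 2) f) := by
    apply finsum2_congr
    intro i j
    rw [pnat_sub11, pnat_cast_ijm1]
    congr 1
    ring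
  have hshY : (∑ᶠ i : ℕ+, ∑ᶠ j : ℕ+, ((((((i : ℕ) : R) + ((j : ℕ) : R)) - 2) * (((i : ℕ) : R) - 1)) •
        (p i * p j * d (i + j - 2) f)))
      = ∑ᶠ i : ℕ+, ∑ᶠ j : ℕ+, (((((i : ℕ) : R) + ((j : ℕ) : R)) - 1) * ((i : ℕ) : R)) •
        (p (i + 1) * p j * d (i + j - 1) f) := by
    refine (finsum2_shift_outer
      (fun i j => ((((((i : ℕ) : R) + ((j : ℕ) : R)) - 2) * (((i : ℕ) : R) - 1)) •
        (p i * p j * d (i + j - 2) f))) (by intro j; simp)).trans (finsum2_congr ?_)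
    intro i j
    show (((((i + 1 : ℕ+) : ℕ) : R) + ((j : ℕ) : R) - 2) * ((((i + 1 : ℕ+) : ℕ) : R) - 1)) •
        (p (i + 1) * p j * d (i + 1 + j - 2) f) = _
    rw [pnat_i1j2, pnat_coe_succ]
    congr 1
    ring
  have hshZ : (∑ᶠ i : ℕ+, ∑ᶠ j : ℕ+, ((((((i : ℕ) : R) + ((j : ℕ) : R)) - 2) * (((j : ℕ) : R) - 1)) •
        (p i * p j * d (i + j - 2) f)))
      = ∑ᶠ i : ℕ+, ∑ᶠ j : ℕ+, (((((i : ℕ) : R) + ((j : ℕ) : R)) - 1) * ((j : ℕ) : R)) •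
        (p i * p (j + 1) * d (i + j - 1) f) := by
    refine (finsum2_shift_inner
      (fun i j => ((((((i : ℕ) : R) + ((j : ℕ) : R)) - 2) * (((j : ℕ) : R) - 1)) •
        (p i * p j * d (i + j - 2) f))) (by intro i; simp)).trans (finsum2_congr ?_)
    intro i j
    show ((((i : ℕ) : R) + (((j + 1 : ℕ+) : ℕ) : R) - 2) * ((((j + 1 : ℕ+) : ℕ) : R) - 1)) •
        (p i * p (j + 1) * d (i + (j + 1) - 2) f) = _
    rw [pnat_ij12, pnat_coe_succ]
    congr 1
    ring
  rw [hcastX, ← hshY, ← hshZ]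
  have e1 : (∑ᶠ i : ℕ+, ∑ᶠ j : ℕ+, (((((i : ℕ) : R) + ((j : ℕ) : R)) - 1) * ((((i : ℕ) : R) + ((j : ℕ) : R)) - 2)) •
        (p i * p j * d (i + j - 2) f))
      - (∑ᶠ i : ℕ+, ∑ᶠ j : ℕ+, ((((((i : ℕ) : R) + ((j : ℕ) : R)) - 2) * (((i : ℕ) : R) - 1)) •
        (p i * p j * d (i + j - 2) f)))
      = ∑ᶠ i : ℕ+, ∑ᶠ j : ℕ+,
          ((((((i : ℕ) : R) + ((j : ℕ) : R)) - 1) * ((((i : ℕ) : R) + ((j : ℕ) : R)) - 2)) •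
            (p i * p j * d (i + j - 2) f)
          - (((((i : ℕ) : R) + ((j : ℕ) : R)) - 2) * (((i : ℕ) : R) - 1)) •
            (p i * p j * d (i + j - 2) f)) := by
    have hXc : (support fun q : ℕ+ × ℕ+ =>
        (((((q.1 : ℕ) : R) + ((q.2 : ℕ) : R)) - 1) * ((((q.1 : ℕ) : R) + ((q.2 : ℕ) : R)) - 2)) •
          (p q.1 * p q.2 * d (q.1 + q.2 - 2) f)).Finite :=
      suppM3' f _ (fun q => p q.1 * p q.2) (fun q => q.1 + q.2 - 2)
        (fun y => fiber_pair_sum_sub 2 y)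
    exact finsum2_sub _ _ hXc hY
  rw [e1]
  have e2 : (∑ᶠ i : ℕ+, ∑ᶠ j : ℕ+,
        ((((((i : ℕ) : R) + ((j : ℕ) : R)) - 1) * ((((i : ℕ) : R) + ((j : ℕ) : R)) - 2)) •
          (p i * p j * d (i + j - 2) f)
        - (((((i : ℕ) : R) + ((j : ℕ) : R)) - 2) * (((i : ℕ) : R) - 1)) •
          (p i * p j * d (i + j - 2) f)))
      - (∑ᶠ i : ℕ+, ∑ᶠ j : ℕ+, ((((((i : ℕ) : R) + ((j : ℕ) : R)) - 2) * (((j : ℕ) : R) - 1)) •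
          (p i * p j * d (i + j - 2) f)))
      = ∑ᶠ i : ℕ+, ∑ᶠ j : ℕ+,
          (((((((i : ℕ) : R) + ((j : ℕ) : R)) - 1) * ((((i : ℕ) : R) + ((j : ℕ) : R)) - 2)) •
            (p i * p j * d (i + j - 2) f)
          - (((((i : ℕ) : R) + ((j : ℕ) : R)) - 2) * (((i : ℕ) : R) - 1)) •
            (p i * p j * d (i + j - 2) f))
          - (((((i : ℕ) : R) + ((j : ℕ) : R)) - 2) * (((j : ℕ) : R) - 1)) •
            (p i * p j * d (i + j - 2) f)) := by
    refine finsum2_sub _ _ ?_ hZ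
    refine supp_pair_sub ?_ hY
    exact suppM3' f _ (fun q => p q.1 * p q.2) (fun q => q.1 + q.2 - 2)
      (fun y => fiber_pair_sum_sub 2 y)
  rw [e2]
  apply finsum2_congr
  intro i j
  rw [← sub_smul, ← sub_smul]
  congr 1
  ring

lemma key3' (w1 w2 : R) (X1 X2 X3 Y1 Y2 Y3 : A) :
    (w1 • X1 + w2 • X2 + X3) - (w1 • Y1 + w2 • Y2 + Y3)
      = w1 • (X1 - Y1) + w2 • (X2 - Y2) + (X3 - Y3) := by
  rw [smul_sub, smul_sub]
  abel


theorem Omega2_explicit (f : A) :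
    Ω 1 f
      = (α - 1) • (∑ᶠ i : ℕ+,
          ((((i : ℕ) : R) - 1) * (((i : ℕ) : R) - 2)) • (p i * d (i - 2) f))
      + (∑ᶠ i : ℕ+, ∑ᶠ j : ℕ+,
          (((i : ℕ) : R) + ((j : ℕ) : R) - 2) • (p i * p j * d (i + j - 2) f))
      + α • (∑ᶠ i : ℕ+, ∑ᶠ j : ℕ+,
          (((i : ℕ) : R) * ((j : ℕ) : R)) • (p (i + j + 2) * d i (d j f))) := by
  have h0 : Ω 1 f = Δop (E₂ f) - E₂ (Δop f) := rfl
  have hC1 : (∑ᶠ i : ℕ+, (((i : ℕ) : R) * ((i : ℕ) : R)) • (p (i + 1) * d i (E₂ f)))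
      - E₂ (∑ᶠ i : ℕ+, (((i : ℕ) : R) * ((i : ℕ) : R)) • (p (i + 1) * d i f))
      = (∑ᶠ i : ℕ+, ((((i : ℕ) : R) * ((i : ℕ) : R)) * (((i : ℕ) : R) - 1)) • (p (i + 1) * d (i - 1) f))
        - ∑ᶠ i : ℕ+, ((((i : ℕ) : R) * ((i : ℕ) : R)) * (((i + 1 : ℕ+) : ℕ) : R)) • (p (i + 1 + 1) * d i f) :=
    C1 (fun i => ((i : ℕ) : R) * ((i : ℕ) : R)) (fun i => i + 1) f
  have hC2 : (∑ᶠ i : ℕ+, ∑ᶠ j : ℕ+, (((i : ℕ) : R) * ((j : ℕ) : R)) • (p (i + j + 1) * d i (d j (E₂ f))))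
      - E₂ (∑ᶠ i : ℕ+, ∑ᶠ j : ℕ+, (((i : ℕ) : R) * ((j : ℕ) : R)) • (p (i + j + 1) * d i (d j f)))
      = (∑ᶠ i : ℕ+, ∑ᶠ j : ℕ+, ((((i : ℕ) : R) * ((j : ℕ) : R)) * (((j : ℕ) : R) - 1)) •
            (p (i + j + 1) * d i (d (j - 1) f))
          + ∑ᶠ i : ℕ+, ∑ᶠ j : ℕ+, ((((i : ℕ) : R) * ((j : ℕ) : R)) * (((i : ℕ) : R) - 1)) •
            (p (i + j + 1) * d (i - 1) (d j f)))
        - ∑ᶠ i : ℕ+, ∑ᶠ j : ℕ+, ((((i : ℕ) : R) * ((j : ℕ) : R)) * (((i + j + 1 : ℕ+) : ℕ) : R)) •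
            (p (i + j + 1 + 1) * d i (d j f)) :=
    C2 (fun i j => ((i : ℕ) : R) * ((j : ℕ) : R)) (fun i j => i + j + 1) f
  have hC3 : (∑ᶠ i : ℕ+, ∑ᶠ j : ℕ+, ((((i : ℕ) : R) + ((j : ℕ) : R)) - 1) • (p i * p j * d (i + j - 1) (E₂ f)))
      - E₂ (∑ᶠ i : ℕ+, ∑ᶠ j : ℕ+, ((((i : ℕ) : R) + ((j : ℕ) : R)) - 1) • (p i * p j * d (i + j - 1) f))
      = (∑ᶠ i : ℕ+, ∑ᶠ j : ℕ+, (((((i : ℕ) : R) + ((j : ℕ) : R)) - 1) * ((((i + j - 1 : ℕ+) : ℕ) : R) - 1)) •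
            (p i * p j * d (i + j - 1 - 1) f))
        - (∑ᶠ i : ℕ+, ∑ᶠ j : ℕ+, (((((i : ℕ) : R) + ((j : ℕ) : R)) - 1) * ((i : ℕ) : R)) •
            (p (i + 1) * p j * d (i + j - 1) f))
        - ∑ᶠ i : ℕ+, ∑ᶠ j : ℕ+, (((((i : ℕ) : R) + ((j : ℕ) : R)) - 1) * ((j : ℕ) : R)) •
            (p i * p (j + 1) * d (i + j - 1) f) :=
    C3 (fun i j => (((i : ℕ) : R) + ((j : ℕ) : R)) - 1) (fun i j => i + j - 1)
      (fun y => fiber_pair_sum_sub 1 y) f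
  rw [h0, Δ_eq f, Δ_eq (E₂ f)]
  unfold Δe
  rw [E₂_add, E₂_add, E₂_smul, E₂_smul, key3', hC1, hC2, hC3, P1Ω f, P2Ω f, P3Ω f,
    add_right_comm]
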